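/- arXiv:math/0409584 — 8 statements merged into one kernel-verified Lean document; each statement's English description precedes it below -/
import Mathlib

section
/- Let P be a fine (finitely generated and cancellative) monoid, and let m_P ⊂ P be the maximal ideal consisting of non-invertible elements. Then the m_P-adic filtration on P is separated, i.e. the intersection ⋂_{n∈ℕ} m_P^n is empty. -/
/-- The maximal ideal `m_P` of a commutative monoid: the set of non-invertible elements. -/
def monNonUnits (P : Type*) [CommMonoid P] : Set P := {x | ¬ IsUnit x}

/-- The `n`-th power `m_P ^ n` of the maximal ideal: all products of `n` non-invertible
elements, times arbitrary elements of `P`. -/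
def monPow (P : Type*) [CommMonoid P] (n : ℕ) : Set P :=
  {x | ∃ f : Fin n → P, (∀ i, ¬ IsUnit (f i)) ∧ ∃ a : P, x = a * ∏ i, f i}

/-!
Fix finitely many generators `g i` of `P` and write elements as monomials `∏ i, g i ^ v i`;
the degree of `v` counts only the non-unit generators. An element of `m_P ^ n` has a monomial
representation of degree at least `n`. In a cancellative monoid, if `u ≤ v` represent the same
element then `∏ i, g i ^ (v - u) i = 1`, which forces `v - u` to vanish on the non-unit
generators, so `u` and `v` have the same degree. By Dickson's lemma
any sequence of representations of a fixed `x` has an increasing subsequence, whose degrees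
are therefore constant; hence the degrees of the representations of `x` are bounded and `x`
lies in no `m_P ^ n` with `n` beyond that bound.
-/

section Monomials

variable {ι M : Type*} [Fintype ι] (g : ι → M)

def monomial [CommMonoid M] (v : ι → ℕ) : M := ∏ i, g i ^ v i

open scoped Classical in
noncomputable def nonunitDegree [Monoid M] (v : ι → ℕ) : ℕ := ∑ i with ¬IsUnit (g i), v i

section CommMonoid

variable [CommMonoid M]

theorem monomial_add (u v : ι → ℕ) : monomial g (u + v) = monomial g u * monomial g v := by
  simp only [monomial, Pi.add_apply, pow_add, Finset.prod_mul_distrib]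

theorem monomial_sum {κ : Type*} (s : Finset κ) (w : κ → ι → ℕ) :
    monomial g (∑ j ∈ s, w j) = ∏ j ∈ s, monomial g (w j) := by
  simp only [monomial, Finset.sum_apply, ← Finset.prod_pow_eq_pow_sum]
  exact Finset.prod_comm

theorem nonunitDegree_add (u v : ι → ℕ) :
    nonunitDegree g (u + v) = nonunitDegree g u + nonunitDegree g v := by
  simp only [nonunitDegree, Pi.add_apply, Finset.sum_add_distrib]

theorem nonunitDegree_sum {κ : Type*} (s : Finset κ) (w : κ → ι → ℕ) :
    nonunitDegree g (∑ j ∈ s, w j) = ∑ j ∈ s, nonunitDegree g (w j) := by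
  simp only [nonunitDegree, Finset.sum_apply]
  exact Finset.sum_comm

theorem isUnit_monomial_iff {v : ι → ℕ} : IsUnit (monomial g v) ↔ nonunitDegree g v = 0 := by
  simp only [monomial, nonunitDegree, IsUnit.prod_iff, Finset.mem_univ, true_implies,
    Finset.sum_eq_zero_iff, Finset.mem_filter]
  refine forall_congr' fun i => ?_
  by_cases hi : IsUnit (g i)
  · simp [hi, hi.pow]
  · simp [hi, isUnit_pow_iff_of_not_isUnit]

variable {g}

theorem exists_monomial_eq (hg : Submonoid.closure (Set.range g) = ⊤) (x : M) :
    ∃ v, monomial g v = x := by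
  obtain ⟨v, hv⟩ := Submonoid.exists_of_mem_closure_range g x (hg ▸ Submonoid.mem_top x)
  exact ⟨v, hv.symm⟩

theorem exists_monomial_eq_of_mem_monPow (hg : Submonoid.closure (Set.range g) = ⊤) {n : ℕ}
    {x : M} (hx : x ∈ monPow M n) : ∃ v, monomial g v = x ∧ n ≤ nonunitDegree g v := by
  obtain ⟨f, hf, a, rfl⟩ := hx
  obtain ⟨va, rfl⟩ := exists_monomial_eq hg a
  choose vf hvf using fun i => exists_monomial_eq hg (f i)
  have hdeg (i : Fin n) : 1 ≤ nonunitDegree g (vf i) := by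
    rw [Nat.one_le_iff_ne_zero, ne_eq, ← isUnit_monomial_iff, hvf]
    exact hf i
  refine ⟨va + ∑ i, vf i, ?_, ?_⟩
  · simp only [monomial_add, monomial_sum, hvf]
  · calc n = ∑ _i : Fin n, 1 := by simp
      _ ≤ ∑ i, nonunitDegree g (vf i) := Finset.sum_le_sum fun i _ => hdeg i
      _ ≤ nonunitDegree g (va + ∑ i, vf i) := by
        rw [nonunitDegree_add, nonunitDegree_sum]
        exact Nat.le_add_left _ _

end CommMonoid

variable [CancelCommMonoid M] {g}

theorem nonunitDegree_eq_of_le {u v : ι → ℕ} (huv : u ≤ v) (h : monomial g u = monomial g v) :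
    nonunitDegree g u = nonunitDegree g v := by
  obtain ⟨w, rfl⟩ : ∃ w, v = u + w := ⟨v - u, (add_tsub_cancel_of_le huv).symm⟩
  have hw : monomial g w = 1 := by rwa [monomial_add, left_eq_mul] at h
  have hw0 : nonunitDegree g w = 0 := (isUnit_monomial_iff g).mp (hw ▸ isUnit_one)
  rw [nonunitDegree_add, hw0, add_zero]

theorem exists_bound_nonunitDegree_of_monomial_eq (x : M) :
    ∃ N, ∀ v, monomial g v = x → nonunitDegree g v ≤ N := by
  by_contra! hunbdd
  choose u hux hudeg using hunbdd
  obtain ⟨φ, hφ⟩ := wellQuasiOrdered_le.exists_monotone_subseq u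
  have hconst (k : ℕ) : nonunitDegree g (u (φ 0)) = nonunitDegree g (u (φ k)) :=
    nonunitDegree_eq_of_le (hφ 0 k k.zero_le) ((hux _).trans (hux _).symm)
  set d := nonunitDegree g (u (φ 0))
  have hlarge : φ d < nonunitDegree g (u (φ d)) := hudeg (φ d)
  have hφd : d ≤ φ d := φ.strictMono.le_apply
  have hd := hconst d
  omega

end Monomials

/-- For a fine (finitely generated and cancellative) monoid `P`, the `m_P`-adic filtration is
separated: `⋂ₙ m_P ^ n = ∅`. -/
theorem stmt1 {P : Type*} [CancelCommMonoid P] (hfg : Monoid.FG P) :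
    (⋂ n : ℕ, monPow P n) = ∅ := by
  obtain ⟨S, hS⟩ := hfg.fg_top
  have hgen : Submonoid.closure (Set.range ((↑) : S → P)) = ⊤ := by
    rwa [Subtype.range_coe_subtype, Finset.setOfPred_mem]
  refine Set.eq_empty_of_forall_notMem fun x hx => ?_
  obtain ⟨N, hN⟩ := exists_bound_nonunitDegree_of_monomial_eq (g := ((↑) : S → P)) x
  obtain ⟨v, hvx, hv⟩ := exists_monomial_eq_of_mem_monPow hgen (Set.mem_iInter.mp hx (N + 1))
  exact absurd (hN v hvx) (by omega)
end

section
/- Let P be a fine and sharp monoid (finitely generated, cancellative, with trivial unit group). Then for every n ∈ ℕ, the complement P \ m_P^n is a finite set. -/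
lemma prod_mem_monPow {P : Type*} [CommMonoid P] {n k : ℕ} (f : Fin (n + k) → P)
    (hf : ∀ i, ¬ IsUnit (f i)) : ∏ i, f i ∈ monPow P n :=
  ⟨fun i => f (Fin.castAdd k i), fun _ => hf _, ∏ i, f (Fin.natAdd n i), by
    rw [Fin.prod_univ_add, mul_comm]⟩

lemma Submonoid.exists_fin_prod_of_mem_closure {M : Type*} [CommMonoid M] {s : Set M} {x : M}
    (hx : x ∈ closure s) : ∃ (k : ℕ) (f : Fin k → s), ∏ i, (f i : M) = x := by
  obtain ⟨l, hl, rfl⟩ := exists_list_of_mem_closure hx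
  exact ⟨l.length, fun i => ⟨l[i.1], hl _ (List.getElem_mem _)⟩, Fin.prod_univ_getElem l⟩

lemma Submonoid.closure_setOf_not_isUnit {M : Type*} [Monoid M]
    (hsharp : ∀ x : M, IsUnit x → x = 1) (s : Set M) :
    closure {x | x ∈ s ∧ ¬ IsUnit x} = closure s := by
  refine le_antisymm (closure_mono fun x hx => hx.1) (closure_le.2 fun x hx => ?_)
  by_cases hu : IsUnit x
  · rw [hsharp x hu]
    exact one_mem _
  · exact subset_closure ⟨hx, hu⟩

/-- For a fine and sharp monoid `P`, the complement `P \ m_P ^ n` is finite for every `n`. -/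
theorem stmt2 {P : Type*} [CancelCommMonoid P] (hfg : Monoid.FG P)
    (hsharp : ∀ x : P, IsUnit x → x = 1) (n : ℕ) :
    ((monPow P n)ᶜ : Set P).Finite := by
  obtain ⟨S, hS⟩ := hfg.fg_top
  set T : Set P := {x | x ∈ (S : Set P) ∧ ¬ IsUnit x}
  have hT : Submonoid.closure T = ⊤ := by rw [Submonoid.closure_setOf_not_isUnit hsharp, hS]
  have : Finite T := (S.finite_toSet.subset fun _ hx => hx.1).to_subtype
  refine (Set.finite_iUnion fun k : Fin n =>
    Set.finite_range fun f : Fin k → T => ∏ i, (f i : P)).subset fun x hx => ?_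
  obtain ⟨k, f, rfl⟩ := Submonoid.exists_fin_prod_of_mem_closure (hT ▸ Submonoid.mem_top x)
  rcases lt_or_ge k n with hk | hk
  · exact Set.mem_iUnion.2 ⟨⟨k, hk⟩, f, rfl⟩
  · obtain ⟨j, rfl⟩ := Nat.exists_eq_add_of_le hk
    exact (hx (prod_mem_monPow _ fun i => (f i).2.2)).elim
end

section
/- Let P be a monoid whose sharp quotient P^♯ = P/P^× is fine. Then the number of elements of m_P \ m_P^2 modulo the translation action of P^× is at least the Krull dimension of P (the maximal length of a chain of prime ideals of P), and equality holds if and only if P^♯ is a free commutative monoid ℕ^r for some r. -/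
/-- An ideal of a commutative monoid. -/
def IsMonIdeal {P : Type*} [CommMonoid P] (I : Set P) : Prop :=
  ∀ x ∈ I, ∀ p : P, p * x ∈ I

/-- A prime ideal of a commutative monoid: an ideal whose complement is a submonoid (face). -/
def IsMonPrime {P : Type*} [CommMonoid P] (I : Set P) : Prop :=
  IsMonIdeal I ∧ (1 : P) ∉ I ∧ ∀ x y : P, x * y ∈ I → x ∈ I ∨ y ∈ I

/-- The Krull dimension of a commutative monoid: the supremum of lengths of chains of prime
ideals. -/
noncomputable def monoidKrullDim (P : Type*) [CommMonoid P] : WithBot ℕ∞ :=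
  Order.krullDim {I : Set P // IsMonPrime I}

open Submonoid

section Irreducible

variable {Q : Type*} [CommMonoid Q]

lemma mem_monPow_two_iff {x : Q} :
    x ∈ monPow Q 2 ↔ ∃ y z : Q, ¬IsUnit y ∧ ¬IsUnit z ∧ x = y * z := by
  constructor
  · rintro ⟨f, hf, a, rfl⟩
    refine ⟨a * f 0, f 1, fun h => hf 0 (isUnit_of_mul_isUnit_right h), hf 1, ?_⟩
    rw [Fin.prod_univ_two, mul_assoc]
  · rintro ⟨y, z, hy, hz, rfl⟩
    exact ⟨![y, z], fun i => by fin_cases i <;> assumption, 1, by simp⟩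

lemma monNonUnits_diff_monPow_two : monNonUnits Q \ monPow Q 2 = {x | Irreducible x} := by
  ext x
  simp only [Set.mem_sdiff, monNonUnits, Set.mem_ofPred_eq, mem_monPow_two_iff, irreducible_iff]
  refine and_congr_right fun _ => ?_
  constructor
  · intro h y z hyz
    by_contra! hu
    exact h ⟨y, z, hu.1, hu.2, hyz⟩
  · rintro h ⟨y, z, hy, hz, hyz⟩
    exact (h hyz).elim hy hz

lemma Associates.irreducible_mk_iff {a : Q} : Irreducible (Associates.mk a) ↔ Irreducible a := by
  simp only [irreducible_iff, Associates.isUnit_mk, Associates.forall_associated,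
    Associates.mk_mul_mk, Associates.mk_eq_mk_iff_associated]
  refine and_congr_right fun _ => ⟨fun h x y hxy => h x y (.of_eq hxy), ?_⟩
  rintro h x y ⟨u, hu⟩
  simpa [Units.isUnit_mul_units] using
    h (a := x) (b := y * ↑u⁻¹) (by rw [← mul_assoc, ← hu, Units.mul_inv_cancel_right])

lemma Associates.image_mk_setOf_irreducible :
    Associates.mk '' {x : Q | Irreducible x} = {x | Irreducible x} := by
  ext x
  obtain ⟨a, rfl⟩ := Associates.mk_surjective x
  simp only [Set.mem_image, Set.mem_ofPred_eq, Associates.irreducible_mk_iff]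
  refine ⟨?_, fun h => ⟨a, h, rfl⟩⟩
  rintro ⟨b, hb, hba⟩
  exact Associates.irreducible_mk_iff.1 (hba ▸ Associates.irreducible_mk_iff.2 hb)

end Irreducible

section Primes

variable {Q R : Type*} [CommMonoid Q] [CommMonoid R] {I J : Set Q}

lemma IsMonIdeal.mem_of_dvd (hI : IsMonIdeal I) {x y : Q} (hx : x ∈ I) (hxy : x ∣ y) : y ∈ I := by
  obtain ⟨c, rfl⟩ := hxy
  simpa [mul_comm] using hI x hx c

lemma IsMonPrime.preimage (f : R →* Q) (hI : IsMonPrime I) : IsMonPrime (f ⁻¹' I) := by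
  refine ⟨fun x hx p => ?_, by simpa using hI.2.1, fun x y hxy => hI.2.2 (f x) (f y) ?_⟩
  · simpa using hI.1 (f x) hx (f p)
  · simpa using hxy

def IsMonPrime.face (hI : IsMonPrime I) : Submonoid Q where
  carrier := Iᶜ
  one_mem' := hI.2.1
  mul_mem' {x y} hx hy hxy := (hI.2.2 x y hxy).elim hx hy

lemma exists_mem_diff_of_closure_eq_top {A : Set Q} (hA : closure A = ⊤) (hJ : IsMonIdeal J)
    (hI : IsMonPrime I) (hIJ : ¬I ⊆ J) : ∃ a ∈ A, a ∈ I ∧ a ∉ J := by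
  by_contra! h
  let M : Submonoid Q :=
    { carrier := {x | x ∈ I → x ∈ J}
      one_mem' := fun h1 => absurd h1 hI.2.1
      mul_mem' := fun {x y} hx hy hxy => (hI.2.2 x y hxy).elim
        (fun hxI => hJ.mem_of_dvd (hx hxI) (dvd_mul_right x y))
        (fun hyI => hJ.mem_of_dvd (hy hyI) (dvd_mul_left y x)) }
  have hM : (⊤ : Submonoid Q) ≤ M := hA ▸ closure_le.2 h
  exact hIJ fun x hx => hM trivial hx

end Primes

section Associates

variable {P : Type*} [CommMonoid P] {I : Set P}

lemma IsMonIdeal.preimage_image_mk (hI : IsMonIdeal I) :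
    Associates.mk ⁻¹' (Associates.mk '' I) = I := by
  refine Set.Subset.antisymm ?_ (Set.subset_preimage_image _ _)
  rintro x ⟨y, hy, hyx⟩
  exact hI.mem_of_dvd hy (Associates.mk_eq_mk_iff_associated.1 hyx).dvd

lemma IsMonPrime.image_mk (hI : IsMonPrime I) : IsMonPrime (Associates.mk '' I) := by
  have hsat := hI.1.preimage_image_mk
  refine ⟨?_, fun ⟨x, hx, hx1⟩ => ?_, fun x y hxy => ?_⟩
  · rintro _ ⟨x, hx, rfl⟩ q
    obtain ⟨p, rfl⟩ := Associates.mk_surjective q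
    exact ⟨p * x, hI.1 x hx p, Associates.mk_mul_mk⟩
  · exact hI.2.1 (hI.1.mem_of_dvd hx (Associates.mk_eq_one.1 hx1).dvd)
  · obtain ⟨a, rfl⟩ := Associates.mk_surjective x
    obtain ⟨b, rfl⟩ := Associates.mk_surjective y
    rw [Associates.mk_mul_mk, ← Set.mem_preimage, hsat] at hxy
    exact (hI.2.2 a b hxy).imp (Set.mem_image_of_mem _) (Set.mem_image_of_mem _)

def primesAssociatesOrderIso :
    {J : Set (Associates P) // IsMonPrime J} ≃o {I : Set P // IsMonPrime I} where
  toFun J := ⟨Associates.mk ⁻¹' J.1, J.2.preimage Associates.mkMonoidHom⟩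
  invFun I := ⟨Associates.mk '' I.1, I.2.image_mk⟩
  left_inv _ := Subtype.ext (Set.image_preimage_eq _ Associates.mk_surjective)
  right_inv I := Subtype.ext I.2.1.preimage_image_mk
  map_rel_iff' := Associates.mk_surjective.preimage_subset_preimage_iff

lemma monoidKrullDim_associates : monoidKrullDim (Associates P) = monoidKrullDim P :=
  Order.krullDim_eq_of_orderIso primesAssociatesOrderIso

end Associates

section Atomic

variable {Q : Type*} [CommMonoid Q] [Subsingleton Qˣ]

lemma Irreducible.mem_of_closure_eq_top {S : Set Q} (hS : closure S = ⊤) {a : Q}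
    (ha : Irreducible a) : a ∈ S := by
  by_contra haS
  let M : Submonoid Q :=
    { carrier := {a}ᶜ
      one_mem' := fun h => ha.not_isUnit (h ▸ isUnit_one)
      mul_mem' := fun {x y} hx hy hxy => (ha.isUnit_or_isUnit hxy.symm).elim
        (fun hxu => hy (by rwa [isUnit_iff_eq_one.1 hxu, one_mul] at hxy))
        (fun hyu => hx (by rwa [isUnit_iff_eq_one.1 hyu, mul_one] at hxy)) }
  have hM : (⊤ : Submonoid Q) ≤ M := hS ▸ closure_le.2 fun x hx hxa => haS (hxa ▸ hx)
  exact hM (mem_top a) rfl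

lemma setOf_irreducible_finite (hfg : Monoid.FG Q) : {x : Q | Irreducible x}.Finite := by
  obtain ⟨S, hS⟩ := hfg.fg_top
  exact S.finite_toSet.subset fun _ ha => ha.mem_of_closure_eq_top hS

variable [IsLeftCancelMul Q]

lemma mem_closure_diff_singleton_of_not_irreducible {S : Set Q} (hS : closure S = ⊤) {s : Q}
    (hs : ¬Irreducible s) : s ∈ closure (S \ {s}) := by
  set C := closure (S \ {s})
  by_cases hsu : IsUnit s
  · exact isUnit_iff_eq_one.1 hsu ▸ C.one_mem
  obtain ⟨y, z, hyz, hy, hz⟩ : ∃ y z, s = y * z ∧ ¬IsUnit y ∧ ¬IsUnit z := by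
    by_contra! h
    exact hs ⟨hsu, fun y z hyz => or_iff_not_imp_left.2 (h y z hyz)⟩
  have htop : closure (insert s S) = ⊤ := top_le_iff.1 (hS ▸ closure_mono (Set.subset_insert s S))
  have hpow : ∀ x, ∃ n : ℕ, ∃ c ∈ C, x = s ^ n * c := by
    intro x
    have hx : x ∈ closure {s} ⊔ C := by
      rw [← Submonoid.closure_union, Set.singleton_union, Set.insert_sdiff_singleton, htop]
      trivial
    obtain ⟨_, hn, c, hc, rfl⟩ := mem_sup.1 hx
    obtain ⟨n, rfl⟩ := (mem_powers_iff _ _).1 (powers_eq_closure s ▸ hn)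
    exact ⟨n, c, hc, rfl⟩
  obtain ⟨n, c, hc, rfl⟩ := hpow y
  obtain ⟨m, d, hd, rfl⟩ := hpow z
  rcases Nat.eq_zero_or_pos (n + m) with hnm | hnm
  · obtain ⟨rfl, rfl⟩ : n = 0 ∧ m = 0 := by omega
    rw [hyz]
    simpa using C.mul_mem hc hd
  -- otherwise cancelling one factor `s` from `s = s ^ (n + m) * c * d` makes `c`, `d` units
  have hone : s ^ (n + m - 1) * (c * d) = 1 := by
    refine mul_left_cancel (a := s) ?_
    conv_rhs => rw [mul_one, hyz]
    rw [← mul_assoc, ← pow_succ', Nat.sub_add_cancel hnm, pow_add, mul_mul_mul_comm]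
  obtain ⟨hspow, hcd⟩ := mul_eq_one.1 hone
  obtain ⟨rfl, rfl⟩ := mul_eq_one.1 hcd
  rcases Nat.eq_zero_or_pos n with rfl | hn
  · exact absurd (by simp) hy
  rcases Nat.eq_zero_or_pos m with rfl | hm
  · exact absurd (by simp) hz
  exact absurd ((isUnit_pow_iff (by omega)).1 (hspow ▸ isUnit_one)) hsu

lemma closure_setOf_irreducible_eq_top (hfg : Monoid.FG Q) :
    closure {x : Q | Irreducible x} = ⊤ := by
  classical
  obtain ⟨S, hS⟩ := hfg.fg_top
  induction S using Finset.strongInduction with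
  | H S ih =>
    by_cases hirr : ∀ s ∈ S, Irreducible s
    · exact top_le_iff.1 (hS ▸ closure_mono hirr)
    push Not at hirr
    obtain ⟨s, hsS, hs⟩ := hirr
    refine ih (S.erase s) (Finset.erase_ssubset hsS) (top_le_iff.1 ?_)
    rw [← hS, Finset.coe_erase, closure_le]
    intro x hx
    obtain rfl | hxs := eq_or_ne x s
    · exact mem_closure_diff_singleton_of_not_irreducible hS hs
    · exact subset_closure ⟨hx, hxs⟩

end Atomic

lemma injective_of_mem_iff_castSucc_lt {X : Type*} {n : ℕ} {α : Fin n → X}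
    {p : Fin (n + 1) → Set X}
    (h : ∀ i j, α i ∈ p j ↔ i.castSucc < j) : Function.Injective α := by
  intro i k hik
  have hi := (h i k.succ).1 (hik ▸ (h k k.succ).2 k.castSucc_lt_succ)
  have hk := (h k i.succ).1 (hik ▸ (h i i.succ).2 i.castSucc_lt_succ)
  rw [Fin.castSucc_lt_succ_iff] at hi hk
  exact le_antisymm hi hk

section Chains

variable {Q : Type*} [CommMonoid Q] {A : Set Q}

lemma LTSeries.exists_generators_separated (hA : closure A = ⊤)
    (p : LTSeries {I : Set Q // IsMonPrime I}) :
    ∃ α : Fin p.length → Q, (∀ i, α i ∈ A) ∧ ∀ i j, α i ∈ (p j).1 ↔ i.castSucc < j := by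
  have hstep (i : Fin p.length) : ∃ a ∈ A, a ∈ (p i.succ).1 ∧ a ∉ (p i.castSucc).1 :=
    exists_mem_diff_of_closure_eq_top hA (p i.castSucc).2.1 (p i.succ).2 (p.step i).not_ge
  choose α hαA hαsucc hαcast using hstep
  refine ⟨α, hαA, fun i j => ⟨fun hij => ?_, fun hij => ?_⟩⟩
  · by_contra! hji
    exact hαcast i (p.monotone hji hij)
  · exact p.monotone (Fin.castSucc_lt_iff_succ_le.1 hij) (hαsucc i)

lemma LTSeries.length_le_ncard_of_closure_eq_top (hA : closure A = ⊤) (hAfin : A.Finite)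
    (p : LTSeries {I : Set Q // IsMonPrime I}) : p.length ≤ A.ncard := by
  obtain ⟨α, hαA, hα⟩ := p.exists_generators_separated hA
  calc p.length = (Set.range α).ncard := by
        rw [Set.ncard_range_of_injective (injective_of_mem_iff_castSucc_lt hα), Nat.card_fin]
    _ ≤ A.ncard := Set.ncard_le_ncard (Set.range_subset_iff.2 hαA) hAfin

lemma monoidKrullDim_le_ncard_of_closure_eq_top (hA : closure A = ⊤) (hAfin : A.Finite) :
    monoidKrullDim Q ≤ A.ncard :=
  iSup_le fun p => by exact_mod_cast p.length_le_ncard_of_closure_eq_top hA hAfin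

end Chains

section PowProd

variable {Q ι : Type*} [CommMonoid Q]

def powProdHom (α : ι → Q) : Multiplicative (ι →₀ ℕ) →* Q where
  toFun f := f.toAdd.prod fun i n => α i ^ n
  map_one' := Finsupp.prod_zero_index
  map_mul' _ _ := Finsupp.prod_add_index' (fun _ => pow_zero _) (fun _ _ _ => pow_add _ _ _)

variable {α : ι → Q}

lemma powProdHom_ofAdd (f : ι →₀ ℕ) :
    powProdHom α (.ofAdd f) = f.prod fun i n => α i ^ n := rfl

lemma powProdHom_ofAdd_single (i : ι) : powProdHom α (.ofAdd (Finsupp.single i 1)) = α i := by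
  simp [powProdHom_ofAdd]

lemma mrange_powProdHom : MonoidHom.mrange (powProdHom α) = closure (Set.range α) := by
  refine le_antisymm ?_ (closure_le.2 ?_)
  · rintro _ ⟨f, rfl⟩
    exact Submonoid.prod_mem _ fun i _ =>
      Submonoid.pow_mem _ (subset_closure (Set.mem_range_self i)) _
  · rintro _ ⟨i, rfl⟩
    exact ⟨_, powProdHom_ofAdd_single i⟩

lemma powProdHom_ofAdd_mem {I : Set Q} (hI : IsMonIdeal I) {f : ι →₀ ℕ} {j : ι}
    (hj : α j ∈ I) (hfj : f j ≠ 0) : powProdHom α (.ofAdd f) ∈ I :=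
  hI.mem_of_dvd hj <| (dvd_pow_self _ hfj).trans <|
    Finset.dvd_prod_of_mem (fun i => α i ^ f i) (f.mem_support_iff.2 hfj)

lemma powProdHom_ofAdd_notMem {I : Set Q} (hI : IsMonPrime I) {f : ι →₀ ℕ}
    (hf : ∀ i ∈ f.support, α i ∉ I) : powProdHom α (.ofAdd f) ∉ I :=
  hI.face.prod_mem fun i hi => hI.face.pow_mem (hf i hi) _

variable [LinearOrder ι] {q : ι → Set Q}

lemma powProdHom_ofAdd_ne (hq : ∀ j, IsMonPrime (q j)) (hα : ∀ i j, α i ∈ q j ↔ i ≤ j)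
    {f g : ι →₀ ℕ} {j : ι} (hfj : f j ≠ 0) (hgj : g j = 0) (hmin : ∀ i ∈ g.support, j ≤ i) :
    powProdHom α (.ofAdd f) ≠ powProdHom α (.ofAdd g) := by
  intro hfg
  refine powProdHom_ofAdd_notMem (hq j) (fun i hi hiq => ?_)
    (hfg ▸ powProdHom_ofAdd_mem (hq j).1 ((hα j j).2 le_rfl) hfj)
  obtain rfl := le_antisymm ((hα i j).1 hiq) (hmin i hi)
  exact Finsupp.mem_support_iff.1 hi hgj

lemma eq_of_powProdHom_ofAdd_eq_of_inf_eq_zero (hq : ∀ j, IsMonPrime (q j))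
    (hα : ∀ i j, α i ∈ q j ↔ i ≤ j) {f g : ι →₀ ℕ} (hfg : f ⊓ g = 0)
    (h : powProdHom α (.ofAdd f) = powProdHom α (.ofAdd g)) : f = g := by
  classical
  by_contra hne
  have hS : (f.support ∪ g.support).Nonempty := by
    by_contra! hS
    simp_all
  set j := (f.support ∪ g.support).min' hS
  have hmin : ∀ i ∈ f.support ∪ g.support, j ≤ i := fun i hi => Finset.min'_le _ i hi
  have hdisj : f j = 0 ∨ g j = 0 := by
    simpa [Finsupp.inf_apply] using DFunLike.congr_fun hfg j
  rcases Finset.mem_union.1 (Finset.min'_mem _ hS) with hf | hg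
  · exact powProdHom_ofAdd_ne hq hα (Finsupp.mem_support_iff.1 hf)
      (hdisj.resolve_left (Finsupp.mem_support_iff.1 hf))
      (fun i hi => hmin i (Finset.mem_union_right _ hi)) h
  · exact powProdHom_ofAdd_ne hq hα (Finsupp.mem_support_iff.1 hg)
      (hdisj.resolve_right (Finsupp.mem_support_iff.1 hg))
      (fun i hi => hmin i (Finset.mem_union_left _ hi)) h.symm

lemma powProdHom_injective [IsLeftCancelMul Q] (hq : ∀ j, IsMonPrime (q j))
    (hα : ∀ i j, α i ∈ q j ↔ i ≤ j) : Function.Injective (powProdHom α) := by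
  intro f g h
  set m := f.toAdd ⊓ g.toAdd
  have hsplit (x : ι →₀ ℕ) (hx : m ≤ x) :
      powProdHom α (.ofAdd x) = powProdHom α (.ofAdd m) * powProdHom α (.ofAdd (x - m)) := by
    rw [← map_mul, ← ofAdd_add, add_tsub_cancel_of_le hx]
  have key : f.toAdd - m = g.toAdd - m := by
    refine eq_of_powProdHom_ofAdd_eq_of_inf_eq_zero hq hα ?_
      (mul_left_cancel (a := powProdHom α (.ofAdd m)) ?_)
    · ext i
      simp only [Finsupp.inf_apply, Finsupp.coe_tsub, Pi.sub_apply, Finsupp.coe_zero,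
        Pi.zero_apply, m]
      omega
    · rw [← hsplit _ inf_le_left, ← hsplit _ inf_le_right]
      exact h
  apply Multiplicative.toAdd.injective
  calc f.toAdd = f.toAdd - m + m := (tsub_add_cancel_of_le inf_le_left).symm
    _ = g.toAdd - m + m := by rw [key]
    _ = g.toAdd := tsub_add_cancel_of_le inf_le_right

end PowProd

section Free

variable {Q ι : Type*} [CommMonoid Q]

lemma powProdHom_map_single (φ : Multiplicative (ι →₀ ℕ) →* Q) :
    powProdHom (fun i => φ (.ofAdd (Finsupp.single i 1))) = φ :=
  Finsupp.mulHom_ext fun i n => by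
    simp only [powProdHom_ofAdd, Finsupp.prod_single_index, pow_zero]
    rw [← map_pow, ← ofAdd_nsmul, Finsupp.smul_single, smul_eq_mul, mul_one]

lemma isMonPrime_setOf_exists_ne_zero (s : Set ι) :
    IsMonPrime {f : Multiplicative (ι →₀ ℕ) | ∃ i ∈ s, f.toAdd i ≠ 0} := by
  refine ⟨?_, by simp, ?_⟩
  · rintro f ⟨i, hi, hf⟩ g
    exact ⟨i, hi, by simp [hf]⟩
  · rintro f g ⟨i, hi, hfg⟩
    by_cases hf : f.toAdd i = 0
    · exact .inr ⟨i, hi, by simpa [hf] using hfg⟩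
    · exact .inl ⟨i, hi, hf⟩

variable {r : ℕ}

lemma le_monoidKrullDim_of_mulEquiv (e : Q ≃* Multiplicative (Fin r →₀ ℕ)) :
    (r : WithBot ℕ∞) ≤ monoidKrullDim Q := by
  let π (k : Fin (r + 1)) : {I : Set Q // IsMonPrime I} :=
    ⟨e ⁻¹' {f | ∃ i ∈ {i : Fin r | i.castSucc < k}, f.toAdd i ≠ 0},
      (isMonPrime_setOf_exists_ne_zero _).preimage e.toMonoidHom⟩
  have hπ : StrictMono π := Fin.strictMono_iff_lt_succ.2 fun k => by
    refine (Set.ssubset_iff_of_subset ?_).2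
      ⟨e.symm (.ofAdd (Finsupp.single k 1)), ⟨k, k.castSucc_lt_succ, by simp⟩, ?_⟩
    · rintro x ⟨i, hi, hx⟩
      exact ⟨i, lt_trans hi k.castSucc_lt_succ, hx⟩
    · rintro ⟨i, hi, hx⟩
      obtain rfl : k = i := by simpa [Finsupp.single_apply] using hx
      exact lt_irrefl k.castSucc hi
  exact Order.le_krullDim_iff.2 ⟨LTSeries.mk r π hπ, rfl⟩

lemma ncard_setOf_irreducible_le_of_mulEquiv [Subsingleton Qˣ]
    (e : Q ≃* Multiplicative (Fin r →₀ ℕ)) : {x : Q | Irreducible x}.ncard ≤ r := by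
  set b : Fin r → Q := fun i => e.symm (.ofAdd (Finsupp.single i 1))
  have hb : closure (Set.range b) = ⊤ := by
    rw [← mrange_powProdHom, show b = fun i => e.symm.toMonoidHom (.ofAdd (Finsupp.single i 1))
      from rfl, powProdHom_map_single]
    exact MonoidHom.mrange_eq_top.2 e.symm.surjective
  calc {x : Q | Irreducible x}.ncard ≤ (Set.range b).ncard :=
        Set.ncard_le_ncard (fun _ hx => hx.mem_of_closure_eq_top hb) (Set.finite_range b)
    _ ≤ (Set.univ : Set (Fin r)).ncard := by rw [← Set.image_univ]; exact Set.ncard_image_le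
    _ = r := by simp

end Free

section Main

variable {Q : Type*} [CommMonoid Q] [IsLeftCancelMul Q]

lemma LTSeries.nonempty_mulEquiv_of_length_eq_ncard {A : Set Q} (hA : closure A = ⊤)
    (hAfin : A.Finite) (p : LTSeries {I : Set Q // IsMonPrime I}) (hp : p.length = A.ncard) :
    Nonempty (Q ≃* Multiplicative (Fin p.length →₀ ℕ)) := by
  obtain ⟨α, hαA, hα⟩ := p.exists_generators_separated hA
  have hrange : Set.range α = A := Set.eq_of_subset_of_ncard_le (Set.range_subset_iff.2 hαA)
    (by rw [Set.ncard_range_of_injective (injective_of_mem_iff_castSucc_lt hα), Nat.card_fin, hp])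
    hAfin
  have hinj : Function.Injective (powProdHom α) :=
    powProdHom_injective (q := fun j => (p j.succ).1) (fun j => (p j.succ).2)
      fun i j => (hα i j.succ).trans Fin.castSucc_lt_succ_iff
  have hsurj : Function.Surjective (powProdHom α) :=
    MonoidHom.mrange_eq_top.1 (by rw [mrange_powProdHom, hrange, hA])
  exact ⟨(MulEquiv.ofBijective _ ⟨hinj, hsurj⟩).symm⟩

variable [Subsingleton Qˣ] (hfg : Monoid.FG Q)
include hfg

theorem monoidKrullDim_le_ncard_setOf_irreducible :
    monoidKrullDim Q ≤ {x : Q | Irreducible x}.ncard :=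
  monoidKrullDim_le_ncard_of_closure_eq_top (closure_setOf_irreducible_eq_top hfg)
    (setOf_irreducible_finite hfg)

theorem monoidKrullDim_eq_ncard_setOf_irreducible_iff :
    monoidKrullDim Q = {x : Q | Irreducible x}.ncard ↔
      ∃ r : ℕ, Nonempty (Q ≃* Multiplicative (Fin r →₀ ℕ)) := by
  refine ⟨fun h => ?_, fun ⟨r, ⟨e⟩⟩ => ?_⟩
  · obtain ⟨p, hp⟩ := Order.le_krullDim_iff.1 h.ge
    exact ⟨_, p.nonempty_mulEquiv_of_length_eq_ncard (closure_setOf_irreducible_eq_top hfg)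
      (setOf_irreducible_finite hfg) hp⟩
  · refine le_antisymm (monoidKrullDim_le_ncard_setOf_irreducible hfg) ?_
    calc ({x : Q | Irreducible x}.ncard : WithBot ℕ∞) ≤ r := by
          exact_mod_cast ncard_setOf_irreducible_le_of_mulEquiv e
      _ ≤ monoidKrullDim Q := le_monoidKrullDim_of_mulEquiv e

end Main

/-- If `P^♯ = P/P^×` is fine, then the number of elements of `m_P \ m_P²` modulo the
translation action of `P^×` (equivalently, the cardinality of its image in `Associates P`)
is at least `dim P`, with equality iff `P^♯` is a free commutative monoid. -/
theorem stmt3 {P : Type*} [CommMonoid P]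
    (hcancel : ∀ a b c : Associates P, a * b = a * c → b = c)
    (hfg : Monoid.FG (Associates P)) :
    monoidKrullDim P ≤ ((Associates.mk '' (monNonUnits P \ monPow P 2)).ncard : WithBot ℕ∞) ∧
    (monoidKrullDim P = ((Associates.mk '' (monNonUnits P \ monPow P 2)).ncard : WithBot ℕ∞) ↔
      ∃ r : ℕ, Nonempty (Associates P ≃* Multiplicative (Fin r →₀ ℕ))) := by
  have : IsLeftCancelMul (Associates P) := ⟨fun a _ _ => hcancel a _ _⟩
  rw [← monoidKrullDim_associates, monNonUnits_diff_monPow_two,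
    Associates.image_mk_setOf_irreducible]
  exact ⟨monoidKrullDim_le_ncard_setOf_irreducible hfg,
    monoidKrullDim_eq_ncard_setOf_irreducible_iff hfg⟩
end

section
/- Let P be a fine and sharp monoid, A a noetherian local ring, and α: P → (A, ·) a local morphism of monoids (i.e. α^{-1}(A^×) = {1}). Then dim A ≤ dim(A / m_P A) + dim P, where m_P A denotes the ideal of A generated by α(m_P). -/
/-!
Write `J = m_P A` and `φ q = α⁻¹(q)` for the monoid prime pulled back from a prime `q` of `A`.
By well-founded induction down `Spec A`, `coheight q ≤ dim (A/J) + coheight (φ q)`. If `J ⊆ q`,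
this is `dim (A/q) ≤ dim (A/J)`. Otherwise some `y ∈ m_P` has `x = α y ∉ q`, and `x` lies in the
maximal ideal because `α` is local. Krull's principal ideal theorem in `A/q` bounds the coheight
of `q` by one more than the coheights of the primes `q' ⊇ q + (x)`, and each such `φ q'` strictly
contains `φ q` (it contains `y`), so its monoid coheight has dropped by at least one.
Taking the supremum over `q` gives the theorem.
-/

open Order IsLocalRing PrimeSpectrum

theorem Order.krullDim_add_one_le_of_forall_coheight_add_one_le {α : Type*} [Preorder α]
    {s : Set α} {n : ℕ∞} (h : ∀ a ∈ s, coheight a + 1 ≤ n) : krullDim s + 1 ≤ n := by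
  rcases isEmpty_or_nonempty s with _ | _
  · simp [Order.krullDim_eq_bot]
  rw [krullDim_eq_iSup_coheight_of_nonempty, ← WithBot.coe_one, ← WithBot.coe_add,
    WithBot.coe_le_coe, ENat.iSup_add]
  refine iSup_le fun a => le_trans ?_ (h a a.2)
  gcongr
  exact coheight_le_coheight_apply_of_strictMono _ (Subtype.strictMono_coe _) a

namespace PrimeSpectrum

variable {A : Type*} [CommRing A]

theorem coheight_eq_ringKrullDim_quotient (p : PrimeSpectrum A) :
    (coheight p : WithBot ℕ∞) = ringKrullDim (A ⧸ p.asIdeal) := by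
  rw [ringKrullDim_quotient, coheight_eq_krullDim_Ici]
  rfl

instance [IsNoetherianRing A] : WellFoundedGT (PrimeSpectrum A) :=
  StrictMono.wellFoundedGT (f := asIdeal) fun p q h => (asIdeal_lt_asIdeal p q).mpr h

/-- Krull's principal ideal theorem in `A ⧸ p`, read through coheights in `Spec A`. -/
theorem coheight_le_of_mem_jacobson [IsNoetherianRing A] {x : A} (hx : x ∈ Ring.jacobson A)
    (p : PrimeSpectrum A) {n : ℕ∞}
    (h : ∀ q : PrimeSpectrum A, p ≤ q → x ∈ q.asIdeal → coheight q + 1 ≤ n) :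
    coheight p ≤ n := by
  set π := Ideal.Quotient.mk p.asIdeal
  have hπx : ({π x} : Set (A ⧸ p.asIdeal)) ⊆ Ring.jacobson (A ⧸ p.asIdeal) :=
    Set.singleton_subset_iff.mpr (Ring.le_comap_jacobson π hx)
  have hspan : Ideal.span {π x} = (Ideal.span {x}).map π := by
    rw [Ideal.map_span, Set.image_singleton]
  have hkrull : ringKrullDim (A ⧸ p.asIdeal) ≤
      ringKrullDim (A ⧸ p.asIdeal ⊔ Ideal.span {x}) + 1 := by
    have := ringKrullDim_le_ringKrullDim_quotient_add_encard _ hπx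
    rwa [Set.encard_singleton, hspan,
      ringKrullDim_eq_of_ringEquiv (DoubleQuot.quotQuotEquivQuotSup _ _)] at this
  have hbound : ringKrullDim (A ⧸ p.asIdeal ⊔ Ideal.span {x}) + 1 ≤ n := by
    rw [ringKrullDim_quotient]
    refine krullDim_add_one_le_of_forall_coheight_add_one_le fun q hq => ?_
    have hq : p.asIdeal ⊔ Ideal.span {x} ≤ q.asIdeal := hq
    exact h q (le_sup_left.trans hq) (hq (Ideal.mem_sup_right (Ideal.mem_span_singleton_self x)))
  exact_mod_cast (coheight_eq_ringKrullDim_quotient p).trans_le (hkrull.trans hbound)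

theorem coheight_le_ringKrullDim_quotient {J : Ideal A} {q : PrimeSpectrum A}
    (hq : J ≤ q.asIdeal) : (coheight q : WithBot ℕ∞) ≤ ringKrullDim (A ⧸ J) := by
  rw [coheight_eq_ringKrullDim_quotient]
  exact ringKrullDim_le_of_surjective _ (Ideal.Quotient.factor_surjective hq)

theorem coheight_le_add_coheight_of_exists_mem_jacobson [IsNoetherianRing A] {Q : Type*}
    [Preorder Q] (φ : PrimeSpectrum A → Q) (J : Ideal A) {D : ℕ∞}
    (hD : ∀ q : PrimeSpectrum A, J ≤ q.asIdeal → coheight q ≤ D)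
    (hφ : ∀ p : PrimeSpectrum A, ¬ J ≤ p.asIdeal →
      ∃ x ∈ Ring.jacobson A, ∀ q, p ≤ q → x ∈ q.asIdeal → φ p < φ q)
    (p : PrimeSpectrum A) : coheight p ≤ D + coheight (φ p) := by
  induction p using WellFoundedGT.induction with
  | _ p ih =>
  by_cases hJp : J ≤ p.asIdeal
  · exact (hD p hJp).trans le_self_add
  obtain ⟨x, hx, hφx⟩ := hφ p hJp
  refine coheight_le_of_mem_jacobson hx p fun q hpq hxq => ?_
  have hφpq := hφx q hpq hxq
  have hpq : p < q := hpq.lt_of_ne (by rintro rfl; exact hφpq.false)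
  calc coheight q + 1 ≤ D + coheight (φ q) + 1 := by gcongr; exact ih q hpq
    _ = D + (coheight (φ q) + 1) := add_assoc _ _ _
    _ ≤ D + coheight (φ p) := by gcongr; exact coheight_add_one_le hφpq

end PrimeSpectrum

section MonoidPrimes

variable {P A : Type*} [CommMonoid P]

theorem isMonPrime_preimage_asIdeal [CommSemiring A] (α : P →* A) (q : PrimeSpectrum A) :
    IsMonPrime (α ⁻¹' q.asIdeal) := by
  refine ⟨fun x hx p => ?_, fun h => q.isPrime.ne_top ?_, fun x y hxy => ?_⟩
  · simpa using q.asIdeal.mul_mem_left (α p) hx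
  · exact (Ideal.eq_top_iff_one _).mpr (by simpa using h)
  · exact q.isPrime.mem_or_mem (by simpa using hxy)

def PrimeSpectrum.comapMonPrime [CommSemiring A] (α : P →* A) (q : PrimeSpectrum A) :
    {I : Set P // IsMonPrime I} :=
  ⟨α ⁻¹' q.asIdeal, isMonPrime_preimage_asIdeal α q⟩

theorem PrimeSpectrum.exists_mem_maximalIdeal_comapMonPrime_lt [CommRing A] [IsLocalRing A]
    (α : P →* A) (hloc : ∀ p : P, IsUnit (α p) → IsUnit p) {p : PrimeSpectrum A}
    (hp : ¬ Ideal.span (α '' monNonUnits P) ≤ p.asIdeal) :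
    ∃ x ∈ maximalIdeal A, ∀ q : PrimeSpectrum A, p ≤ q → x ∈ q.asIdeal →
      comapMonPrime α p < comapMonPrime α q := by
  obtain ⟨_, ⟨y, hy, rfl⟩, hyp⟩ := Set.not_subset.mp (mt Ideal.span_le.mpr hp)
  refine ⟨α y, (mem_maximalIdeal _).mpr fun hu => hy (hloc y hu), fun q hpq hyq => ?_⟩
  exact lt_of_le_not_ge (fun z hz => hpq hz) fun h => hyp (h hyq)

end MonoidPrimes

theorem stmt5_general {A : Type*} (P : Type*) [CommRing A] [IsNoetherianRing A] [IsLocalRing A]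
    [CancelCommMonoid P] (α : P →* A) (hloc : ∀ p : P, IsUnit (α p) → IsUnit p) :
    ringKrullDim A ≤
      ringKrullDim (A ⧸ Ideal.span (α '' monNonUnits P)) + monoidKrullDim P := by
  set J := Ideal.span (α '' monNonUnits P)
  have hJ : J ≤ maximalIdeal A :=
    Ideal.span_le.mpr (by rintro _ ⟨y, hy, rfl⟩; exact fun hu => hy (hloc y hu))
  have : Nontrivial (A ⧸ J) :=
    Ideal.Quotient.nontrivial_iff.mpr (ne_top_of_le_ne_top (maximalIdeal.isMaximal A).ne_top hJ)
  obtain ⟨D, hD⟩ := WithBot.ne_bot_iff_exists.mp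
    (ne_bot_of_le_ne_bot WithBot.zero_ne_bot (ringKrullDim_nonneg_of_nontrivial (R := A ⧸ J)))
  have hcoheight (p : PrimeSpectrum A) : coheight p ≤ D + coheight (comapMonPrime α p) := by
    refine coheight_le_add_coheight_of_exists_mem_jacobson _ J (fun q hq => ?_) (fun p hp => ?_) p
    · exact_mod_cast (coheight_le_ringKrullDim_quotient hq).trans_eq hD.symm
    · rw [ringJacobson_eq_maximalIdeal]
      exact exists_mem_maximalIdeal_comapMonPrime_lt α hloc hp
  rw [ringKrullDim, krullDim_eq_iSup_coheight_of_nonempty,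
    WithBot.coe_iSup (OrderTop.bddAbove _)]
  refine iSup_le fun p => ?_
  calc (coheight p : WithBot ℕ∞) ≤ D + coheight (comapMonPrime α p) := mod_cast hcoheight p
    _ ≤ ringKrullDim (A ⧸ J) + monoidKrullDim P := by
      rw [← hD]
      gcongr
      exact coheight_le_krullDim _

/-- Let `P` be a fine and sharp monoid, `A` a noetherian local ring, and `α : P → (A,·)` a
local morphism of monoids.  Then `dim A ≤ dim (A / m_P A) + dim P`. -/
theorem stmt5 {A : Type*} (P : Type*) [CommRing A] [IsNoetherianRing A] [IsLocalRing A]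
    [CancelCommMonoid P] (hfg : Monoid.FG P) (hsharp : ∀ x : P, IsUnit x → x = 1)
    (α : P →* A) (hloc : ∀ p : P, IsUnit (α p) → IsUnit p) :
    ringKrullDim A ≤
      ringKrullDim (A ⧸ Ideal.span (α '' monNonUnits P)) + monoidKrullDim P :=
  stmt5_general P α hloc
end

section
/- Let P be a monoid such that the sharp quotient P^♯ is fine, let k > 1 be an integer, and suppose the k-Frobenius endomorphism 𝐤_P: P → P, x ↦ x^k, is a flat morphism of monoids. Then P^♯ is a free commutative monoid (isomorphic to ℕ^r for some r). -/
/-!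
Every atom `a` of `P^♯` is prime, so `P^♯`, which is atomic with finitely many atoms, is free on
its atoms. Primality comes from the equational criterion of flatness for `x ↦ x ^ k`.
First, atoms are radical: a divisibility-minimal `h ≠ 1` with `h ^ k = a * s` has a cofactor `s`
without nontrivial `k`-th power factors, and flatness applied to `a ^ k * s = h ^ k * a ^ (k - 1)`
then forces `h = a`. Next, if `a ∣ x * y` and `a ∤ x`, flatness applied to
`x ^ k * (y * a ^ (k - 1)) = a ^ k * (z * x ^ (k - 1))` yields `c` with `a ∣ x * c` and
`c ^ k ∣ y * a ^ (k - 1)`, so `c` is smaller than `y` for divisibility modulo `a` unless `c`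
divides a power of `a`; by well-founded induction `a ∣ c`, whence `a ∣ y`. Well-foundedness holds
because finite generation makes divisibility a well-quasi-order (Dickson's lemma).
-/

/-- A morphism of (integral) commutative monoids is flat if it satisfies the equational
criterion of flatness: every relation `l p₁ * q₁ = l p₂ * q₂` is generated by a relation
in the source.  (For integral monoids this is equivalent to the target being a filtered
colimit of free modules over the source.) -/
def IsFlatMonoidHom {M N : Type*} [CommMonoid M] [CommMonoid N] (l : M →* N) : Prop :=
  ∀ (p₁ p₂ : M) (q₁ q₂ : N), l p₁ * q₁ = l p₂ * q₂ →
    ∃ (q : N) (a b : M), q₁ = l a * q ∧ q₂ = l b * q ∧ p₁ * a = p₂ * b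

namespace Monoid.FG

variable {M : Type*} [CommMonoid M] [Monoid.FG M]

theorem wellQuasiOrdered_dvd : WellQuasiOrdered fun x y : M => x ∣ y := by
  obtain ⟨S, hS⟩ := Monoid.FG.fg_top (M := M)
  let ev : ((· ≤ ·) : (S → ℕ) → (S → ℕ) → Prop) →r fun x y : M => x ∣ y :=
    ⟨fun n => ∏ i, i.1 ^ n i,
      fun h => Finset.prod_dvd_prod_of_dvd _ _ fun i _ => pow_dvd_pow _ (h i)⟩
  refine wellQuasiOrdered_le.of_surjective ev fun x => ?_
  obtain ⟨n, hn⟩ := Submonoid.mem_closure_finset'.1 (hS ▸ Submonoid.mem_top x)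
  exact ⟨n, hn.symm⟩

theorem wellFounded_of_dvd_imp {r : M → M → Prop} [IsPreorder M r]
    (hr : ∀ x y, x ∣ y → r x y) : WellFounded fun x y => r x y ∧ ¬r y x :=
  WellQuasiOrdered.wellFounded fun f =>
    (wellQuasiOrdered_dvd f).imp fun _ => Exists.imp fun _ => And.imp_right (hr _ _)

theorem wellFounded_strictDvd : WellFounded fun x y : M => x ∣ y ∧ ¬y ∣ x :=
  have : IsPreorder M (· ∣ ·) := {}
  wellFounded_of_dvd_imp fun _ _ => id

end Monoid.FG

section Irreducible

variable {M : Type*} [CommMonoid M]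

theorem isUnit_of_mul_dvd_left [IsLeftCancelMul M] {x y : M} (h : x * y ∣ x) : IsUnit y := by
  obtain ⟨z, hz⟩ := h
  exact .of_mul_eq_one z (mul_left_cancel (a := x) (by rw [mul_one, ← mul_assoc, ← hz]))

variable [Monoid.FG M]

theorem finite_setOf_irreducible [Subsingleton Mˣ] : {a : M | Irreducible a}.Finite := by
  obtain ⟨S, hS⟩ := Monoid.FG.fg_top (M := M)
  refine S.finite_toSet.subset fun a ha => ?_
  have key : ∀ x ∈ Submonoid.closure (S : Set M), Irreducible x → x ∈ S := by
    intro x hx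
    induction hx using Submonoid.closure_induction with
    | mem x hx => exact fun _ => hx
    | one => exact fun h => absurd isUnit_one h.not_isUnit
    | mul x y _ _ ihx ihy =>
      intro h
      rcases h.eq_one_or_eq_one with rfl | rfl
      · rw [one_mul] at h ⊢; exact ihy h
      · rw [mul_one] at h ⊢; exact ihx h
  exact key a (hS ▸ Submonoid.mem_top a) ha

variable [IsLeftCancelMul M]

theorem exists_irreducible_dvd {x : M} (hx : ¬IsUnit x) : ∃ a, Irreducible a ∧ a ∣ x := by
  obtain ⟨a, ⟨hax, ha⟩, hmin⟩ :=
    Monoid.FG.wellFounded_strictDvd.has_min {a : M | a ∣ x ∧ ¬IsUnit a} ⟨x, dvd_rfl, hx⟩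
  refine ⟨a, ⟨ha, fun b c hbc => or_iff_not_imp_left.2 fun hb => ?_⟩, hax⟩
  have hab : a ∣ b := not_and_not_right.1
    (hmin b ⟨(Dvd.intro c hbc.symm).trans hax, hb⟩) (Dvd.intro c hbc.symm)
  exact isUnit_of_mul_dvd_left (hbc ▸ mul_dvd_mul_right hab c)

theorem Submonoid.closure_setOf_irreducible [Subsingleton Mˣ] :
    Submonoid.closure {a : M | Irreducible a} = ⊤ := by
  refine eq_top_iff.2 fun x _ => Monoid.FG.wellFounded_strictDvd.induction x fun x ih => ?_
  by_cases hx : IsUnit x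
  · rw [isUnit_iff_eq_one.1 hx]; exact one_mem _
  obtain ⟨a, ha, y, rfl⟩ := exists_irreducible_dvd hx
  refine mul_mem (subset_closure ha) (ih y ⟨dvd_mul_left y a, fun h => ha.not_isUnit ?_⟩)
  exact isUnit_of_mul_dvd_left (by rwa [mul_comm] at h)

end Irreducible

namespace IsFlatMonoidHom

theorem id (M : Type*) [CommMonoid M] : IsFlatMonoidHom (MonoidHom.id M) :=
  fun _ _ q₁ q₂ h => ⟨1, q₁, q₂, (mul_one q₁).symm, (mul_one q₂).symm, h⟩

theorem comp {M N O : Type*} [CommMonoid M] [CommMonoid N] [CommMonoid O] {g : N →* O}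
    {f : M →* N} (hg : IsFlatMonoidHom g) (hf : IsFlatMonoidHom f) :
    IsFlatMonoidHom (g.comp f) := by
  intro p₁ p₂ q₁ q₂ h
  obtain ⟨q, a, b, rfl, rfl, hab⟩ := hg (f p₁) (f p₂) q₁ q₂ h
  obtain ⟨q', a', b', rfl, rfl, hab'⟩ := hf p₁ p₂ a b hab
  exact ⟨g q' * q, a', b', by simp [mul_assoc], by simp [mul_assoc], hab'⟩

variable {M : Type*} [CommMonoid M] {k : ℕ}

theorem powMonoidHom_pow (h : IsFlatMonoidHom (powMonoidHom k : M →* M)) (n : ℕ) :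
    IsFlatMonoidHom (powMonoidHom (k ^ n) : M →* M) := by
  induction n with
  | zero => convert id M using 1; ext; simp
  | succ n ih =>
    convert ih.comp h using 1
    ext x
    simp [pow_succ, ← pow_mul, mul_comm]

theorem associates {P : Type*} [CommMonoid P] (h : IsFlatMonoidHom (powMonoidHom k : P →* P)) :
    IsFlatMonoidHom (powMonoidHom k : Associates P →* Associates P) := by
  intro p₁ p₂ q₁ q₂ hrel
  obtain ⟨p₁, rfl⟩ := Associates.mk_surjective p₁
  obtain ⟨p₂, rfl⟩ := Associates.mk_surjective p₂
  obtain ⟨x₁, rfl⟩ := Associates.mk_surjective q₁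
  obtain ⟨x₂, rfl⟩ := Associates.mk_surjective q₂
  simp only [powMonoidHom_apply, ← Associates.mk_pow, Associates.mk_mul_mk,
    Associates.mk_eq_mk_iff_associated] at hrel
  obtain ⟨u, hu⟩ := hrel
  obtain ⟨q, a, b, hx₁, rfl, hab⟩ := h p₁ p₂ (x₁ * u) x₂ (by rw [← mul_assoc]; exact hu)
  simp only [powMonoidHom_apply] at hx₁
  refine ⟨.mk q, .mk a, .mk b, ?_, ?_, by simp only [Associates.mk_mul_mk, hab]⟩
  · rw [powMonoidHom_apply, ← Associates.mk_pow, Associates.mk_mul_mk, ← hx₁,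
      Associates.mk_eq_mk_iff_associated]
    exact ⟨u, rfl⟩
  · simp only [powMonoidHom_apply, ← Associates.mk_pow, Associates.mk_mul_mk]

theorem exists_eq_mul_of_pow_eq_pow_mul [Subsingleton Mˣ]
    (h : IsFlatMonoidHom (powMonoidHom k : M →* M)) (hk : k ≠ 0) {x y z : M}
    (hxyz : x ^ k = y ^ k * z) : ∃ d, z = d ^ k ∧ x = y * d := by
  obtain ⟨q, d, b, hz, hb, hyd⟩ := h y x z 1 (by simp [hxyz])
  rw [eq_comm, mul_eq_one, powMonoidHom_apply] at hb
  obtain ⟨hb, rfl⟩ := hb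
  obtain rfl : b = 1 := isUnit_iff_eq_one.1 ((isUnit_pow_iff hk).1 (hb ▸ isUnit_one))
  exact ⟨d, by simpa using hz, by simpa using hyd.symm⟩

end IsFlatMonoidHom

section Flat

variable {M : Type*} [CommMonoid M] [IsLeftCancelMul M] [Subsingleton Mˣ] [Monoid.FG M]
  {k : ℕ} {a : M}

theorem Irreducible.dvd_of_dvd_flat_pow (hflat : IsFlatMonoidHom (powMonoidHom k : M →* M))
    (hk : k ≠ 0) (ha : Irreducible a) {x : M} (hx : a ∣ x ^ k) : a ∣ x := by
  let H := {h : M | ¬IsUnit h ∧ a ∣ h ^ k}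
  have hxH : x ∈ H := ⟨fun hu => ha.not_isUnit (isUnit_of_dvd_unit hx (hu.pow k)), hx⟩
  obtain ⟨h, ⟨⟨hh, s, hs⟩, hhx⟩, hmin⟩ :=
    Monoid.FG.wellFounded_strictDvd.has_min {h | h ∈ H ∧ h ∣ x} ⟨x, hxH, dvd_rfl⟩
  have hmin' : ∀ g ∈ H, g ∣ h → h ∣ g := fun g hg hgh =>
    not_and_not_right.1 (hmin g ⟨hg, hgh.trans hhx⟩) hgh
  -- by minimality of `h`, the cofactor `s` has no nontrivial `k`-th power factor
  have hs_free : ∀ c q, s = c ^ k * q → c = 1 := by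
    intro c q hcq
    obtain ⟨v, hv, rfl⟩ := hflat.exists_eq_mul_of_pow_eq_pow_mul hk
      (x := h) (y := c) (z := a * q) (by rw [hs, hcq, mul_left_comm])
    have hvH : v ∈ H := ⟨fun hu => ha.not_isUnit
      (isUnit_of_dvd_unit (dvd_mul_right a q) (hv ▸ hu.pow k)), q, hv.symm⟩
    exact isUnit_iff_eq_one.1 <| isUnit_of_mul_dvd_left (x := v) <| by
      rw [mul_comm]; exact hmin' v hvH (dvd_mul_left v c)
  obtain ⟨q, c, d, hsq, -, hacd⟩ := hflat a h s (a ^ (k - 1)) <| by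
    simp only [powMonoidHom_apply]
    rw [hs, ← pow_sub_one_mul hk, mul_comm (a * s), mul_assoc]
  obtain rfl := hs_free c q hsq
  rw [mul_one] at hacd
  obtain rfl := isUnit_iff_eq_one.1 ((ha.isUnit_or_isUnit hacd).resolve_left hh)
  rw [hacd, mul_one]
  exact hhx

theorem Irreducible.dvd_of_dvd_pow_of_isFlat (hflat : IsFlatMonoidHom (powMonoidHom k : M →* M))
    (hk : 1 < k) (ha : Irreducible a) {x : M} {n : ℕ} (hx : a ∣ x ^ n) : a ∣ x :=
  ha.dvd_of_dvd_flat_pow (hflat.powMonoidHom_pow n) (pow_pos (by omega) n).ne'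
    (hx.trans (pow_dvd_pow x (Nat.lt_pow_self hk).le))

theorem Irreducible.isUnit_or_dvd_of_dvd_pow (hflat : IsFlatMonoidHom (powMonoidHom k : M →* M))
    (hk : 1 < k) (ha : Irreducible a) {c : M} {n : ℕ} (hc : c ∣ a ^ n) : IsUnit c ∨ a ∣ c := by
  refine or_iff_not_imp_left.2 fun hcu => ?_
  obtain ⟨b, hb, hbc⟩ := exists_irreducible_dvd hcu
  have hba : b ∣ a := hb.dvd_of_dvd_pow_of_isFlat hflat hk (hbc.trans hc)
  exact (hb.associated_of_dvd ha hba).symm.dvd.trans hbc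

theorem Irreducible.dvd_or_dvd_of_isFlat (hflat : IsFlatMonoidHom (powMonoidHom k : M →* M))
    (hk : 1 < k) (ha : Irreducible a) {x y : M} (hxy : a ∣ x * y) : a ∣ x ∨ a ∣ y := by
  refine or_iff_not_imp_left.2 fun hax => ?_
  obtain ⟨m, rfl⟩ : ∃ m, k = m + 1 + 1 := ⟨k - 2, by omega⟩
  -- divisibility up to powers of `a`, i.e. divisibility in the quotient monoid where `a = 1`
  let r : M → M → Prop := fun u v => ∃ i, u ∣ v * a ^ i
  have : IsPreorder M r :=
    { refl := fun u => ⟨0, by simp⟩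
      trans := fun u v w ⟨i, hi⟩ ⟨j, hj⟩ =>
        ⟨j + i, hi.trans (by rw [pow_add, ← mul_assoc]; exact mul_dvd_mul_right hj _)⟩ }
  have hwf := Monoid.FG.wellFounded_of_dvd_imp (r := r) fun u v h => ⟨0, by simpa using h⟩
  refine hwf.induction (C := fun y => a ∣ x * y → a ∣ y) y (fun y ih hxy => ?_) hxy
  obtain ⟨z, hz⟩ := hxy
  obtain ⟨q, c, d, hyc, -, hxc⟩ := hflat x a (y * a ^ (m + 1)) (z * x ^ (m + 1)) <| by
    simp only [powMonoidHom_apply]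
    calc x ^ (m + 1 + 1) * (y * a ^ (m + 1)) = x ^ (m + 1) * a ^ (m + 1) * (x * y) := by
          rw [pow_succ x (m + 1)]; ac_rfl
      _ = a ^ (m + 1 + 1) * (z * x ^ (m + 1)) := by rw [hz, pow_succ a (m + 1)]; ac_rfl
  simp only [powMonoidHom_apply] at hyc
  have hac : a ∣ c := by
    by_cases hyc' : r y c
    · obtain ⟨i, w, hw⟩ := hyc'
      have hca : c ∣ a ^ (i + (m + 1)) := ⟨c ^ m * q * w, mul_left_cancel (a := c) <| by
        calc c * a ^ (i + (m + 1)) = y * a ^ (m + 1) * w := by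
              rw [pow_add, ← mul_assoc, hw]; ac_rfl
          _ = c * (c * (c ^ m * q * w)) := by rw [hyc, pow_succ', pow_succ']; ac_rfl⟩
      refine (ha.isUnit_or_dvd_of_dvd_pow hflat hk hca).resolve_left fun hcu => hax ?_
      exact hcu.dvd_mul_right.1 ⟨d, hxc⟩
    · exact ih c ⟨⟨m + 1, c ^ (m + 1) * q, by rw [hyc, pow_succ', mul_assoc]⟩, hyc'⟩ ⟨d, hxc⟩
  obtain ⟨c', rfl⟩ := hac
  refine ⟨c' ^ (m + 1 + 1) * q, mul_left_cancel (a := a ^ (m + 1)) ?_⟩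
  rw [mul_comm, hyc, mul_pow, pow_succ a (m + 1)]
  ac_rfl

end Flat

section Free

variable {M : Type*} [CommMonoid M] {ι : Type*}

noncomputable def Finsupp.prodPowHom (e : ι → M) : Multiplicative (ι →₀ ℕ) →* M where
  toFun f := f.toAdd.prod (e · ^ ·)
  map_one' := Finsupp.prod_zero_index
  map_mul' _ _ := Finsupp.prod_add_index' (fun _ => pow_zero _) fun _ _ _ => pow_add _ _ _

variable [Subsingleton Mˣ] {e : ι → M}
  (he : Function.Injective e) (hirr : ∀ i, Irreducible (e i))
  (hprime : ∀ i x y, e i ∣ x * y → e i ∣ x ∨ e i ∣ y)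
include he hirr hprime

theorem not_dvd_prodPowHom {j : ι} {f : Multiplicative (ι →₀ ℕ)} (hfj : f.toAdd j = 0) :
    ¬e j ∣ Finsupp.prodPowHom e f := by
  let S : Submonoid M :=
    { carrier := {x | ¬e j ∣ x}
      mul_mem' := fun hx hy hxy => (hprime j _ _ hxy).elim hx hy
      one_mem' := fun h => (hirr j).not_isUnit (isUnit_of_dvd_one h) }
  refine S.prod_mem fun i hi => S.pow_mem (fun hji => ?_) _
  have hij : i ≠ j := fun h => Finsupp.mem_support_iff.1 hi (h ▸ hfj)
  exact hij (he (associated_iff_eq.1 ((hirr j).associated_of_dvd (hirr i) hji)).symm)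

variable [IsLeftCancelMul M]

theorem pow_dvd_prodPowHom_iff {j : ι} {n : ℕ} {f : Multiplicative (ι →₀ ℕ)} :
    e j ^ n ∣ Finsupp.prodPowHom e f ↔ n ≤ f.toAdd j := by
  have hsplit : Finsupp.prodPowHom e f =
      e j ^ f.toAdd j * Finsupp.prodPowHom e (.ofAdd (f.toAdd.erase j)) :=
    (Finsupp.mul_prod_erase' _ _ _ fun _ => pow_zero _).symm
  refine ⟨fun h => not_lt.1 fun hlt => ?_, fun h => hsplit ▸ (pow_dvd_pow _ h).mul_right _⟩
  obtain ⟨w, hw⟩ := (pow_dvd_pow (e j) hlt).trans h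
  refine not_dvd_prodPowHom he hirr hprime (j := j) (f := .ofAdd (f.toAdd.erase j)) (by simp)
    ⟨w, ?_⟩
  exact mul_left_cancel (a := e j ^ f.toAdd j) (by rw [← hsplit, hw, pow_succ, mul_assoc])

theorem injective_prodPowHom : Function.Injective (Finsupp.prodPowHom e) := by
  have hle {f g} (h : Finsupp.prodPowHom e f = Finsupp.prodPowHom e g) : f.toAdd ≤ g.toAdd :=
    fun j => (pow_dvd_prodPowHom_iff he hirr hprime).1
      (h ▸ (pow_dvd_prodPowHom_iff he hirr hprime).2 le_rfl)
  exact fun f g hfg => Multiplicative.toAdd.injective (le_antisymm (hle hfg) (hle hfg.symm))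

end Free

theorem exists_mulEquiv_finsupp_of_irreducible_dvd_or_dvd {M : Type*} [CommMonoid M]
    [IsLeftCancelMul M] [Subsingleton Mˣ] [Monoid.FG M]
    (hprime : ∀ a : M, Irreducible a → ∀ x y, a ∣ x * y → a ∣ x ∨ a ∣ y) :
    ∃ r : ℕ, Nonempty (M ≃* Multiplicative (Fin r →₀ ℕ)) := by
  let ι := {a : M // Irreducible a}
  have : Finite ι := finite_setOf_irreducible.to_subtype
  have hsurj : Function.Surjective (Finsupp.prodPowHom (Subtype.val : ι → M)) := by
    intro x
    have hx : x ∈ Submonoid.closure (Set.range (Subtype.val : ι → M)) := by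
      rw [Subtype.range_coe_subtype, Submonoid.closure_setOf_irreducible]
      exact Submonoid.mem_top x
    obtain ⟨f, rfl⟩ := Submonoid.mem_closure_range_iff.1 hx
    exact ⟨.ofAdd f, rfl⟩
  let W := MulEquiv.ofBijective _ ⟨injective_prodPowHom Subtype.val_injective (fun a => a.2)
    (fun a => hprime a a.2), hsurj⟩
  exact ⟨_, ⟨W.symm.trans (Finsupp.domCongr (Finite.equivFin ι)).toMultiplicative⟩⟩

/-- Kunz's theorem for monoids: if `P^♯` is fine and the `k`-Frobenius `x ↦ x^k` (`k > 1`)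
is flat, then `P^♯` is a free commutative monoid. -/
theorem stmt7 {P : Type*} [CommMonoid P]
    (hcancel : ∀ a b c : Associates P, a * b = a * c → b = c)
    (hfg : Monoid.FG (Associates P)) (k : ℕ) (hk : 1 < k)
    (hflat : IsFlatMonoidHom (powMonoidHom k : P →* P)) :
    ∃ r : ℕ, Nonempty (Associates P ≃* Multiplicative (Fin r →₀ ℕ)) := by
  have : IsLeftCancelMul (Associates P) := ⟨fun a b c => hcancel a b c⟩
  exact exists_mulEquiv_finsupp_of_irreducible_dvd_or_dvd fun a ha _ _ =>
    ha.dvd_or_dvd_of_isFlat hflat.associates hk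
end

section
/- Let G be an abelian group, H a monoid, φ: H → P' and ψ: H → G morphisms of monoids, and I ⊂ P' an ideal. Then the natural map ℤ[I] ⊗_{ℤ[H]} ℤ[G] → I·ℤ[P' ⊗_H G] is an isomorphism of ℤ[P' ⊗_H G]-modules, where P' ⊗_H G denotes the pushout of monoids and I·ℤ[P'⊗_H G] the ideal generated by the image of I. -/
/-!
Since `I` is an ideal, `J = I·ℤ[P']` is spanned over `ℤ` by `I`, so `J ⊗[ℤ[H]] ℤ[G]` is spanned
over `ℤ` by the tensors `x ⊗ g` with `x ∈ I`, `g ∈ G`; two of them coincide as soon as `(x, g)`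
and `(x', g')` are identified in the pushout `(P' × G) ⧸ ~`. The map sends `x ⊗ g` to the basis
vector `ι x * ρ g` of `ℤ[K]`, and since `e` is injective and `ℤ[P'] ⊗ ℤ[G]` maps onto
`ℤ[(P' × G) ⧸ ~]`, equal images force `(x, g) ~ (x', g')`. So a spanning family is sent
injectively to part of a basis, which gives injectivity. The image is the ideal generated by `J`
in `ℤ[P'] ⊗ ℤ[G]`, transported by `e`.
-/

open scoped TensorProduct

theorem LinearMap.injective_of_map_eq_basis {R M N X ι : Type*} [CommSemiring R]
    [AddCommMonoid M] [Module R M] [AddCommMonoid N] [Module R N] (b : Module.Basis ι R N)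
    (F : M →ₗ[R] N) (f : X → M) (κ : X → ι) (hf : Submodule.span R (Set.range f) = ⊤)
    (hF : ∀ x, F (f x) = b (κ x)) (hκ : ∀ x y, κ x = κ y → f x = f y) :
    Function.Injective F := by
  classical
  let L : N →ₗ[R] M := b.constr R fun i => if h : ∃ x, κ x = i then f h.choose else 0
  have hLF : L ∘ₗ F = LinearMap.id := LinearMap.ext_on_range hf fun x => by
    have hx : ∃ y, κ y = κ x := ⟨x, rfl⟩
    simp only [LinearMap.comp_apply, hF, L, Module.Basis.constr_basis, dif_pos hx]
    exact hκ _ _ hx.choose_spec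
  exact Function.LeftInverse.injective (g := L) (LinearMap.congr_fun hLF)

theorem Submodule.span_int_range_eq_top {R M X : Type*} [Ring R] [AddCommGroup M]
    [Module R M] {N : Submodule R M} {u : X → N}
    (hN : N.restrictScalars ℤ = span ℤ (Set.range fun x => (u x : M))) :
    span ℤ (Set.range u) = ⊤ := by
  let incl : N →ₗ[ℤ] M := N.subtype.toAddMonoidHom.toIntLinearMap
  apply Submodule.map_injective_of_injective (f := incl) Subtype.val_injective
  rw [Submodule.map_span, ← Set.range_comp, Submodule.map_top]
  change span ℤ (Set.range fun x => (u x : M)) = _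
  rw [← hN]
  ext x
  rw [restrictScalars_mem, LinearMap.mem_range]
  exact ⟨fun hx => ⟨⟨x, hx⟩, rfl⟩, by rintro ⟨y, rfl⟩; exact y.2⟩

theorem TensorProduct.span_int_range_tmul_eq_top {R M N X Y : Type*} [CommRing R]
    [AddCommGroup M] [Module R M] [AddCommGroup N] [Module R N] {u : X → M} {v : Y → N}
    (hu : Submodule.span ℤ (Set.range u) = ⊤) (hv : Submodule.span ℤ (Set.range v) = ⊤) :
    Submodule.span ℤ (Set.range fun a : X × Y => u a.1 ⊗ₜ[R] v a.2) = ⊤ := by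
  rw [← Set.image2_range, eq_top_iff]
  rintro z -
  induction z using TensorProduct.induction_on with
  | zero => exact zero_mem _
  | add z z' hz hz' => exact add_mem hz hz'
  | tmul m n =>
    have := Submodule.apply_mem_map₂ ((TensorProduct.mk R M N).restrictScalars₁₂ ℤ ℤ)
      (hu ▸ Submodule.mem_top : m ∈ _) (hv ▸ Submodule.mem_top : n ∈ _)
    rwa [Submodule.map₂_span_span] at this

theorem RingEquiv.range_comp_rTensor_subtype {R A B T : Type*} [CommRing R] [CommRing A]
    [CommRing B] [Algebra R A] [Algebra R B] [Semiring T] (e : A ⊗[R] B ≃+* T) (J : Ideal A) :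
    Set.range (fun z => e (LinearMap.rTensor B (J.restrictScalars R).subtype z)) =
      Ideal.map ((e : A ⊗[R] B →+* T).comp Algebra.TensorProduct.includeLeftRingHom) J := by
  have hJ (x : A ⊗[R] B) : x ∈ J.map Algebra.TensorProduct.includeLeftRingHom ↔
      x ∈ LinearMap.range (LinearMap.rTensor B (J.restrictScalars R).subtype) := by
    rw [← Ideal.map_includeLeft_eq, Submodule.restrictScalars_mem]; rfl
  ext y
  rw [SetLike.mem_coe, ← Ideal.map_map,
    Ideal.mem_map_iff_of_surjective (e : A ⊗[R] B →+* T) e.surjective]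
  simp [hJ]

namespace MonoidAlgebra

theorem mapDomainRingHom_of {k M N : Type*} [Semiring k] [Monoid M] [Monoid N] (f : M →* N)
    (m : M) : mapDomainRingHom k f (of k M m) = of k N (f m) :=
  mapDomain_single

theorem span_range_of (k M : Type*) [CommSemiring k] [Monoid M] :
    Submodule.span k (Set.range (of k M)) = ⊤ :=
  (basis M k).span_eq

theorem restrictScalars_ideal_span_of_image {k M : Type*} [CommSemiring k] [Monoid M]
    {T : Set M} (hT : ∀ x ∈ T, ∀ m : M, m * x ∈ T) :
    (Ideal.span (of k M '' T)).restrictScalars k = Submodule.span k (of k M '' T) := by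
  ext x
  rw [Submodule.restrictScalars_mem, mem_ideal_span_of_image]
  have : x ∈ Submodule.span k (of k M '' T) ↔ x ∈ supported k k T := by
    rw [supported_eq_span_single]; rfl
  rw [this, mem_supported]
  constructor
  · rintro h m hm
    obtain ⟨m', hm', d, rfl⟩ := h m hm
    exact hT m' hm' d
  · exact fun h m hm => ⟨m, h hm, 1, (one_mul m).symm⟩

theorem of_smul_of {M N : Type*} [CommMonoid M] [CommMonoid N] {f : M →* N}
    [Algebra (MonoidAlgebra ℤ M) (MonoidAlgebra ℤ N)]
    (hf : algebraMap (MonoidAlgebra ℤ M) (MonoidAlgebra ℤ N) = mapDomainRingHom ℤ f)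
    (m : M) (n : N) : of ℤ M m • of ℤ N n = of ℤ N (f m * n) := by
  rw [Algebra.smul_def, hf, mapDomainRingHom_of, ← map_mul]

end MonoidAlgebra

local notation "ℤ[" M "]" => MonoidAlgebra ℤ M

open MonoidAlgebra

/-- For a group `G`, the pushout of `P ← H → G` in commutative monoids is
`(P × G) ⧸ pushoutCon φ ψ`. -/
def pushoutCon {H P G : Type*} [CommMonoid H] [CommMonoid P] [CommGroup G] (φ : H →* P)
    (ψ : H →* G) : Con (P × G) where
  r a b := ∃ h₁ h₂, φ h₁ * a.1 = φ h₂ * b.1 ∧ a.2 * ψ h₂ = b.2 * ψ h₁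
  iseqv := by
    refine ⟨fun _ => ⟨1, 1, rfl, rfl⟩, fun ⟨h₁, h₂, e₁, e₂⟩ => ⟨h₂, h₁, e₁.symm, e₂.symm⟩, ?_⟩
    rintro a b c ⟨h₁, h₂, e₁, e₂⟩ ⟨k₁, k₂, f₁, f₂⟩
    refine ⟨k₁ * h₁, h₂ * k₂, ?_, ?_⟩
    · calc φ (k₁ * h₁) * a.1 = φ k₁ * (φ h₂ * b.1) := by rw [map_mul, mul_assoc, e₁]
        _ = φ h₂ * (φ k₂ * c.1) := by rw [mul_left_comm, f₁]
        _ = φ (h₂ * k₂) * c.1 := by rw [map_mul, mul_assoc]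
    · calc a.2 * ψ (h₂ * k₂) = b.2 * ψ k₂ * ψ h₁ := by
            rw [map_mul, ← mul_assoc, e₂, mul_right_comm]
        _ = c.2 * ψ (k₁ * h₁) := by rw [f₂, map_mul, mul_assoc]
  mul' := by
    rintro a b c d ⟨h₁, h₂, e₁, e₂⟩ ⟨k₁, k₂, f₁, f₂⟩
    refine ⟨h₁ * k₁, h₂ * k₂, ?_, ?_⟩
    · simp only [Prod.fst_mul, map_mul]
      rw [mul_mul_mul_comm, e₁, f₁, mul_mul_mul_comm]
    · simp only [Prod.snd_mul, map_mul]
      rw [mul_mul_mul_comm, e₂, f₂, mul_mul_mul_comm]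

section TensorOverH

variable {H P G : Type*} [CommMonoid H] [CommMonoid P] [CommGroup G] {φ : H →* P} {ψ : H →* G}
  [Algebra ℤ[H] ℤ[P]] [Algebra ℤ[H] ℤ[G]]

theorem tmul_of_eq_of_pushoutCon (hφ : algebraMap ℤ[H] ℤ[P] = mapDomainRingHom ℤ φ)
    (hψ : algebraMap ℤ[H] ℤ[G] = mapDomainRingHom ℤ ψ) (N : Submodule ℤ[H] ℤ[P]) {x x' : P}
    (hx : of ℤ P x ∈ N) (hx' : of ℤ P x' ∈ N) {g g' : G} (hrel : pushoutCon φ ψ (x, g) (x', g')) :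
    (⟨_, hx⟩ : N) ⊗ₜ[ℤ[H]] of ℤ G g = (⟨_, hx'⟩ : N) ⊗ₜ[ℤ[H]] of ℤ G g' := by
  have shift (n : N) (g : G) (h : H) :
      n ⊗ₜ[ℤ[H]] of ℤ G g = (of ℤ H h • n) ⊗ₜ of ℤ G (g / ψ h) := by
    rw [TensorProduct.smul_tmul, of_smul_of hψ, mul_div_cancel]
  obtain ⟨h₁, h₂, e₁, e₂⟩ := hrel
  have e₁' : of ℤ H h₁ • (⟨_, hx⟩ : N) = of ℤ H h₂ • ⟨_, hx'⟩ :=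
    Subtype.ext <| by simp only [SetLike.val_smul, of_smul_of hφ, e₁]
  rw [shift _ g h₁, shift _ g' h₂, div_eq_div_iff_mul_eq_mul.mpr e₂, e₁']

theorem pushoutCon_of_tmul_eq (hφ : algebraMap ℤ[H] ℤ[P] = mapDomainRingHom ℤ φ)
    (hψ : algebraMap ℤ[H] ℤ[G] = mapDomainRingHom ℤ ψ) {p p' : P} {g g' : G}
    (h : of ℤ P p ⊗ₜ[ℤ[H]] of ℤ G g = of ℤ P p' ⊗ₜ[ℤ[H]] of ℤ G g') :
    pushoutCon φ ψ (p, g) (p', g') := by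
  let c := pushoutCon φ ψ
  let u : P →* c.Quotient := c.mk'.comp (MonoidHom.inl P G)
  let v : G →* c.Quotient := c.mk'.comp (MonoidHom.inr P G)
  have huv : u.comp φ = v.comp ψ := by
    ext h
    exact c.eq.mpr ⟨1, h, by simp, by simp⟩
  let _ : Algebra ℤ[H] ℤ[c.Quotient] := (mapDomainRingHom ℤ (u.comp φ)).toAlgebra
  let U : ℤ[P] →ₐ[ℤ[H]] ℤ[c.Quotient] :=
    { mapDomainRingHom ℤ u with
      commutes' := fun r => by
        rw [hφ]; exact (RingHom.congr_fun (mapDomainRingHom_comp u φ) r).symm }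
  let V : ℤ[G] →ₐ[ℤ[H]] ℤ[c.Quotient] :=
    { mapDomainRingHom ℤ v with
      commutes' := fun r => by
        show _ = mapDomainRingHom ℤ (u.comp φ) r
        rw [hψ, huv]; exact (RingHom.congr_fun (mapDomainRingHom_comp v ψ) r).symm }
  have hUV (p : P) (g : G) :
      Algebra.TensorProduct.productMap U V (of ℤ P p ⊗ₜ of ℤ G g) = of ℤ _ (c.mk' (p, g)) := by
    rw [Algebra.TensorProduct.productMap_apply_tmul]
    show mapDomainRingHom ℤ u _ * mapDomainRingHom ℤ v _ = _
    rw [mapDomainRingHom_of, mapDomainRingHom_of, ← map_mul]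
    simp only [u, v, MonoidHom.comp_apply, ← map_mul, MonoidHom.inl_apply, MonoidHom.inr_apply,
      Prod.mk_mul_mk, mul_one, one_mul]
  have := congrArg (Algebra.TensorProduct.productMap U V) h
  rw [hUV, hUV] at this
  exact c.eq.mp (of_injective this)

end TensorOverH

theorem map_of_tmul_of_eq_of_mul {R P G K F : Type*} [CommRing R] [CommMonoid P] [CommMonoid G]
    [CommMonoid K] [Algebra R ℤ[P]] [Algebra R ℤ[G]] {ι : P →* K} {ρ : G →* K}
    [FunLike F (ℤ[P] ⊗[R] ℤ[G]) ℤ[K]] [RingHomClass F (ℤ[P] ⊗[R] ℤ[G]) ℤ[K]] (e : F)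
    (he₁ : ∀ x : ℤ[P], e (x ⊗ₜ[R] 1) = mapDomainRingHom ℤ ι x)
    (he₂ : ∀ y : ℤ[G], e (1 ⊗ₜ[R] y) = mapDomainRingHom ℤ ρ y) (p : P) (g : G) :
    e (of ℤ P p ⊗ₜ[R] of ℤ G g) = of ℤ K (ι p * ρ g) := by
  rw [← mul_one (of ℤ P p), ← one_mul (of ℤ G g), ← Algebra.TensorProduct.tmul_mul_tmul,
    map_mul, he₁, he₂, mapDomainRingHom_of, mapDomainRingHom_of, map_mul]

theorem injective_ringEquiv_comp_rTensor_ideal_span {H P G K : Type*} [CommMonoid H]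
    [CommMonoid P] [CommGroup G] [CommMonoid K] {φ : H →* P} {ψ : H →* G} {ι : P →* K}
    {ρ : G →* K} [Algebra ℤ[H] ℤ[P]] [Algebra ℤ[H] ℤ[G]]
    (hφ : algebraMap ℤ[H] ℤ[P] = mapDomainRingHom ℤ φ)
    (hψ : algebraMap ℤ[H] ℤ[G] = mapDomainRingHom ℤ ψ) {I : Set P}
    (hI : ∀ x ∈ I, ∀ p : P, p * x ∈ I) (e : ℤ[P] ⊗[ℤ[H]] ℤ[G] ≃+* ℤ[K])
    (he : ∀ p g, e (of ℤ P p ⊗ₜ of ℤ G g) = of ℤ K (ι p * ρ g)) :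
    Function.Injective fun z : (Ideal.span (of ℤ P '' I)).restrictScalars ℤ[H] ⊗[ℤ[H]] ℤ[G] =>
      e (LinearMap.rTensor ℤ[G] ((Ideal.span (of ℤ P '' I)).restrictScalars ℤ[H]).subtype z) := by
  set J := (Ideal.span (of ℤ P '' I)).restrictScalars ℤ[H]
  have hJ (x : I) : of ℤ P x ∈ J := Ideal.subset_span ⟨x, x.2, rfl⟩
  let f (a : I × G) : J ⊗[ℤ[H]] ℤ[G] := ⟨_, hJ a.1⟩ ⊗ₜ of ℤ G a.2
  have hf : Submodule.span ℤ (Set.range f) = ⊤ := by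
    refine TensorProduct.span_int_range_tmul_eq_top (u := fun x : I => (⟨_, hJ x⟩ : J))
      (v := of ℤ G) (Submodule.span_int_range_eq_top ?_) (span_range_of ℤ G)
    rw [← Set.image_eq_range]
    exact restrictScalars_ideal_span_of_image hI
  let F : J ⊗[ℤ[H]] ℤ[G] →ₗ[ℤ] ℤ[K] :=
    { toFun z := e (LinearMap.rTensor ℤ[G] J.subtype z)
      map_add' _ _ := by simp only [map_add]
      map_smul' _ _ := by simp only [LinearMap.map_smul_of_tower, map_zsmul, RingHom.id_apply] }
  refine LinearMap.injective_of_map_eq_basis (basis K ℤ) F f (fun a => ι a.1 * ρ a.2) hf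
    (fun a => he a.1 a.2) fun a b hab => tmul_of_eq_of_pushoutCon hφ hψ J _ _ ?_
  exact pushoutCon_of_tmul_eq hφ hψ (e.injective <| by rw [he, he]; exact congrArg _ hab)

theorem stmt9_general {H P' G K : Type*} [CommMonoid H] [CommMonoid P'] [CommGroup G] [CommMonoid K]
    (φ : H →* P') (ψ : H →* G) (ι : P' →* K) (ρ : G →* K)
    (I : Set P') (hI : ∀ x ∈ I, ∀ p : P', p * x ∈ I) :
    letI : Algebra (MonoidAlgebra ℤ H) (MonoidAlgebra ℤ P') :=
      (MonoidAlgebra.mapDomainRingHom ℤ φ).toAlgebra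
    letI : Algebra (MonoidAlgebra ℤ H) (MonoidAlgebra ℤ G) :=
      (MonoidAlgebra.mapDomainRingHom ℤ ψ).toAlgebra
    let J : Ideal (MonoidAlgebra ℤ P') := Ideal.span ((MonoidAlgebra.of ℤ P') '' I)
    ∀ e : (MonoidAlgebra ℤ P' ⊗[MonoidAlgebra ℤ H] MonoidAlgebra ℤ G) ≃+* MonoidAlgebra ℤ K,
      (∀ x : MonoidAlgebra ℤ P',
        e (x ⊗ₜ[MonoidAlgebra ℤ H] (1 : MonoidAlgebra ℤ G)) =
          MonoidAlgebra.mapDomainRingHom ℤ ι x) →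
      (∀ y : MonoidAlgebra ℤ G,
        e ((1 : MonoidAlgebra ℤ P') ⊗ₜ[MonoidAlgebra ℤ H] y) =
          MonoidAlgebra.mapDomainRingHom ℤ ρ y) →
      Function.Injective (fun z : ↥(J.restrictScalars (MonoidAlgebra ℤ H))
            ⊗[MonoidAlgebra ℤ H] MonoidAlgebra ℤ G =>
          e (LinearMap.rTensor (MonoidAlgebra ℤ G)
              (Submodule.subtype (J.restrictScalars (MonoidAlgebra ℤ H))) z)) ∧
      Set.range (fun z : ↥(J.restrictScalars (MonoidAlgebra ℤ H))
            ⊗[MonoidAlgebra ℤ H] MonoidAlgebra ℤ G =>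
          e (LinearMap.rTensor (MonoidAlgebra ℤ G)
              (Submodule.subtype (J.restrictScalars (MonoidAlgebra ℤ H))) z)) =
        ↑(Ideal.span ((MonoidAlgebra.of ℤ K) '' (⇑ι '' I))) := by
  intro J e he₁ he₂
  let _ : Algebra ℤ[H] ℤ[P'] := (mapDomainRingHom ℤ φ).toAlgebra
  let _ : Algebra ℤ[H] ℤ[G] := (mapDomainRingHom ℤ ψ).toAlgebra
  refine ⟨injective_ringEquiv_comp_rTensor_ideal_span rfl rfl hI e
    (map_of_tmul_of_eq_of_mul e he₁ he₂), ?_⟩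
  have hι : (e : ℤ[P'] ⊗[ℤ[H]] ℤ[G] →+* ℤ[K]).comp Algebra.TensorProduct.includeLeftRingHom =
      mapDomainRingHom ℤ ι :=
    RingHom.ext he₁
  rw [RingEquiv.range_comp_rTensor_subtype, hι, Ideal.map_span, Set.image_image, Set.image_image]
  simp only [mapDomainRingHom_of]

/-- Let `H` be a monoid, `G` an abelian group, `φ : H → P'` and `ψ : H → G` morphisms of
monoids, `(K, ι, ρ)` the pushout `P' ⊗_H G`, and `I ⊆ P'` an ideal.  Then the natural map
`ℤ[I] ⊗_{ℤ[H]} ℤ[G] → I·ℤ[P' ⊗_H G]` is an isomorphism: composed with any ring isomorphism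
`e : ℤ[P'] ⊗_{ℤ[H]} ℤ[G] ≃ ℤ[K]` compatible with the natural inclusions, the canonical map
from `ℤ[I] ⊗_{ℤ[H]} ℤ[G]` is injective with image the ideal generated by `I` in `ℤ[K]`. -/
theorem stmt9 {H P' G K : Type*} [CommMonoid H] [CommMonoid P'] [CommGroup G] [CommMonoid K]
    (φ : H →* P') (ψ : H →* G) (ι : P' →* K) (ρ : G →* K)
    (hcomm : ι.comp φ = ρ.comp ψ)
    (huniv : ∀ (L : Type*) [CommMonoid L], ∀ (u : P' →* L) (v : G →* L),
      u.comp φ = v.comp ψ → ∃! w : K →* L, w.comp ι = u ∧ w.comp ρ = v)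
    (I : Set P') (hI : ∀ x ∈ I, ∀ p : P', p * x ∈ I) :
    letI : Algebra (MonoidAlgebra ℤ H) (MonoidAlgebra ℤ P') :=
      (MonoidAlgebra.mapDomainRingHom ℤ φ).toAlgebra
    letI : Algebra (MonoidAlgebra ℤ H) (MonoidAlgebra ℤ G) :=
      (MonoidAlgebra.mapDomainRingHom ℤ ψ).toAlgebra
    let J : Ideal (MonoidAlgebra ℤ P') := Ideal.span ((MonoidAlgebra.of ℤ P') '' I)
    ∀ e : (MonoidAlgebra ℤ P' ⊗[MonoidAlgebra ℤ H] MonoidAlgebra ℤ G) ≃+* MonoidAlgebra ℤ K,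
      (∀ x : MonoidAlgebra ℤ P',
        e (x ⊗ₜ[MonoidAlgebra ℤ H] (1 : MonoidAlgebra ℤ G)) =
          MonoidAlgebra.mapDomainRingHom ℤ ι x) →
      (∀ y : MonoidAlgebra ℤ G,
        e ((1 : MonoidAlgebra ℤ P') ⊗ₜ[MonoidAlgebra ℤ H] y) =
          MonoidAlgebra.mapDomainRingHom ℤ ρ y) →
      Function.Injective (fun z : ↥(J.restrictScalars (MonoidAlgebra ℤ H))
            ⊗[MonoidAlgebra ℤ H] MonoidAlgebra ℤ G =>
          e (LinearMap.rTensor (MonoidAlgebra ℤ G)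
              (Submodule.subtype (J.restrictScalars (MonoidAlgebra ℤ H))) z)) ∧
      Set.range (fun z : ↥(J.restrictScalars (MonoidAlgebra ℤ H))
            ⊗[MonoidAlgebra ℤ H] MonoidAlgebra ℤ G =>
          e (LinearMap.rTensor (MonoidAlgebra ℤ G)
              (Submodule.subtype (J.restrictScalars (MonoidAlgebra ℤ H))) z)) =
        ↑(Ideal.span ((MonoidAlgebra.of ℤ K) '' (⇑ι '' I))) :=
  stmt9_general φ ψ ι ρ I hI
end

section
/- Let P be a fine and sharp monoid with P^gp torsion-free. Then there exist an integer r ≥ 0, a fine saturated submonoid Q ⊂ ℕ^r with (1,1,…,1) ∈ Q and Q = ℕ^r ∩ Q^gp (intersection inside ℤ^r), an integer N > 0, and monoid morphisms f: P → Q, g: Q → P such that g(f(x)) = x^N for all x ∈ P. -/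
/-!
Write the monoid additively and embed it in its Grothendieck group `Λ ≅ ℤ^d`. The lattice
points of the rational cone spanned by `P` are cut out by finitely many integral functionals
(Minkowski–Weyl, proved by Fourier–Motzkin elimination over the generators). Discarding the zero
functionals, all of them are positive at the sum `u` of the generators, so after rescaling they
take a common value `K` at `u`. Sharpness makes the cone pointed, hence `Φ = (φᵢ) : Λ → ℤ^r` is
injective. Then `Q = {v ∈ ℕ^r | K • v ∈ Φ(Λ)}` is saturated, finitely generated by Gordan's
lemma, and contains `(1, …, 1) = Φ(u) / K`. Take `f = Φ` on `P` and `g(v) = m • Φ⁻¹(K • v)`,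
where `m` is a common exponent, found on the generators of `Q`, that brings these cone points
back into `P`; then `g (f x) = (m * K) • x`.
-/

open Algebra

section FourierMotzkin

variable {α 𝕜 : Type*} [Field 𝕜] [LinearOrder 𝕜] [IsStrictOrderedRing 𝕜]

theorem exists_nonneg_forall_mul_le_iff (F : Finset α) (a b : α → 𝕜) :
    (∃ t, 0 ≤ t ∧ ∀ i ∈ F, t * a i ≤ b i) ↔
      (∀ i ∈ F, 0 ≤ a i → 0 ≤ b i) ∧
        ∀ i ∈ F, ∀ j ∈ F, 0 < a i → a j < 0 → 0 ≤ a i * b j - a j * b i := by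
  constructor
  · rintro ⟨t, ht, h⟩
    refine ⟨fun i hi hai => (mul_nonneg ht hai).trans (h i hi), fun i hi j hj hai haj => ?_⟩
    nlinarith [h i hi, h j hj]
  rintro ⟨hnonneg, hpair⟩
  classical
  -- `t` is the largest of `0` and the lower bounds `b j / a j`.
  set L := insert 0 ((F.filter (a · < 0)).image fun j => b j / a j)
  have hL : L.Nonempty := Finset.insert_nonempty _ _
  refine ⟨L.max' hL, L.le_max' 0 (Finset.mem_insert_self _ _), fun i hi => ?_⟩
  rcases lt_trichotomy (a i) 0 with hai | hai | hai
  · rw [← div_le_iff_of_neg hai]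
    exact L.le_max' _ (Finset.mem_insert_of_mem
      (Finset.mem_image_of_mem _ (Finset.mem_filter.2 ⟨hi, hai⟩)))
  · simpa [hai] using hnonneg i hi hai.ge
  · rw [← le_div_iff₀ hai]
    refine L.max'_le hL _ fun x hx => ?_
    rcases Finset.mem_insert.1 hx with rfl | hx
    · exact div_nonneg (hnonneg i hi hai.le) hai.le
    obtain ⟨j, hj, rfl⟩ := Finset.mem_image.1 hx
    obtain ⟨hj, haj⟩ := Finset.mem_filter.1 hj
    rw [div_le_iff_of_neg haj, div_mul_eq_mul_div, div_le_iff₀ hai]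
    linarith [hpair i hi j hj hai haj]

end FourierMotzkin

namespace AddSubmonoid

variable {Λ : Type*} [AddCommGroup Λ]

-- The lattice points `S^sat` of the rational cone of `S`, in the sense of log geometry (not
-- `AddSubmonoid.saturation`).
def sat (S : AddSubmonoid Λ) : Set Λ := {y | ∃ m : ℕ, 0 < m ∧ m • y ∈ S}

theorem mem_sat_of_mem {S : AddSubmonoid Λ} {y : Λ} (hy : y ∈ S) : y ∈ S.sat :=
  ⟨1, one_pos, by rwa [one_smul]⟩

theorem mem_sat_sup_closure_singleton_iff {S : AddSubmonoid Λ} {F : Finset (Λ →+ ℤ)}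
    (hF : ∀ y, y ∈ S.sat ↔ ∀ φ ∈ F, 0 ≤ φ y) (p y : Λ) :
    y ∈ (S ⊔ closure {p}).sat ↔ ∃ t : ℚ, 0 ≤ t ∧ ∀ φ ∈ F, t * φ p ≤ φ y := by
  constructor
  · rintro ⟨m, hm, hmy⟩
    obtain ⟨s, hs, q, hq, hsum⟩ := mem_sup.1 hmy
    obtain ⟨n, rfl⟩ := mem_closure_singleton.1 hq
    refine ⟨n / m, by positivity, fun φ hφ => ?_⟩
    have hφs : 0 ≤ φ s := (hF s).1 (mem_sat_of_mem hs) φ hφ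
    have hφsum := congrArg φ hsum
    simp only [map_add, map_nsmul, nsmul_eq_mul] at hφsum
    rw [div_mul_eq_mul_div, div_le_iff₀ (by positivity)]
    exact_mod_cast (by linarith : (n : ℤ) * φ p ≤ φ y * m)
  · rintro ⟨t, ht, h⟩
    set n := t.num.toNat
    have hn : (n : ℚ) = t.den * t := by
      rw [mul_comm, Rat.mul_den_eq_num]
      exact_mod_cast Int.toNat_of_nonneg (Rat.num_nonneg.2 ht)
    have hshift : t.den • y - n • p ∈ S.sat := (hF _).2 fun φ hφ => by
      simp only [map_sub, map_nsmul, nsmul_eq_mul, sub_nonneg]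
      have : (n : ℚ) * φ p ≤ t.den * φ y := by
        rw [hn, mul_assoc]
        exact mul_le_mul_of_nonneg_left (h φ hφ) (by positivity)
      exact_mod_cast this
    obtain ⟨m, hm, hmem⟩ := hshift
    refine ⟨m * t.den, Nat.mul_pos hm t.den_pos, ?_⟩
    have hsplit : (m * t.den) • y = m • (t.den • y - n • p) + (m * n) • p := by
      rw [smul_sub, mul_smul, mul_smul]
      abel
    rw [hsplit]
    exact add_mem (mem_sup_left hmem) (mem_sup_right (mem_closure_singleton.2 ⟨_, rfl⟩))

open Classical in
noncomputable def fourierMotzkin (F : Finset (Λ →+ ℤ)) (p : Λ) : Finset (Λ →+ ℤ) :=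
  F.filter (fun φ => 0 ≤ φ p) ∪
    ((F ×ˢ F).filter fun φψ => 0 < φψ.1 p ∧ φψ.2 p < 0).image
      fun φψ => φψ.1 p • φψ.2 - φψ.2 p • φψ.1

theorem forall_mem_fourierMotzkin_iff (F : Finset (Λ →+ ℤ)) (p y : Λ) :
    (∀ χ ∈ fourierMotzkin F p, 0 ≤ χ y) ↔
      (∀ φ ∈ F, 0 ≤ φ p → 0 ≤ φ y) ∧
        ∀ φ ∈ F, ∀ ψ ∈ F, 0 < φ p → ψ p < 0 → 0 ≤ φ p * ψ y - ψ p * φ y := by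
  simp only [fourierMotzkin, Finset.forall_mem_union, Finset.forall_mem_image, Finset.mem_filter,
    Finset.mem_product, and_imp, Prod.forall, AddMonoidHom.sub_apply, AddMonoidHom.smul_apply,
    smul_eq_mul]
  exact and_congr_right fun _ =>
    ⟨fun h φ hφ ψ hψ => h φ ψ hφ hψ, fun h φ ψ hφ hψ => h φ hφ ψ hψ⟩

theorem mem_sat_sup_closure_singleton_iff_fourierMotzkin {S : AddSubmonoid Λ}
    {F : Finset (Λ →+ ℤ)} (hF : ∀ y, y ∈ S.sat ↔ ∀ φ ∈ F, 0 ≤ φ y) (p y : Λ) :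
    y ∈ (S ⊔ closure {p}).sat ↔ ∀ χ ∈ fourierMotzkin F p, 0 ≤ χ y := by
  rw [mem_sat_sup_closure_singleton_iff hF, forall_mem_fourierMotzkin_iff,
    exists_nonneg_forall_mul_le_iff F (fun φ => (φ p : ℚ)) (fun φ => (φ y : ℚ))]
  norm_cast

theorem mem_sat_bot [IsAddTorsionFree Λ] {y : Λ} : y ∈ (⊥ : AddSubmonoid Λ).sat ↔ y = 0 := by
  constructor
  · rintro ⟨m, hm, hy⟩
    exact nsmul_right_injective hm.ne' ((mem_bot.1 hy).trans (smul_zero m).symm)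
  · rintro rfl
    exact mem_sat_of_mem (zero_mem _)

theorem exists_finset_sat_bot [IsAddTorsionFree Λ] [Module.Finite ℤ Λ] :
    ∃ F : Finset (Λ →+ ℤ), ∀ y, y ∈ (⊥ : AddSubmonoid Λ).sat ↔ ∀ φ ∈ F, 0 ≤ φ y := by
  classical
  let b := Module.Free.chooseBasis ℤ Λ
  refine ⟨Finset.univ.image (fun i => (b.coord i).toAddMonoidHom) ∪
    Finset.univ.image (fun i => -(b.coord i).toAddMonoidHom), fun y => ?_⟩
  rw [mem_sat_bot, ← b.forall_coord_eq_zero_iff]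
  simp [le_antisymm_iff, forall_and, or_imp, and_comm]

-- Minkowski–Weyl for lattice cones.
theorem exists_finset_sat_closure [IsAddTorsionFree Λ] [Module.Finite ℤ Λ] (s : Finset Λ) :
    ∃ F : Finset (Λ →+ ℤ), ∀ y, y ∈ (closure (s : Set Λ)).sat ↔ ∀ φ ∈ F, 0 ≤ φ y := by
  classical
  induction s using Finset.induction_on with
  | empty => simpa using exists_finset_sat_bot
  | insert p s _ ih =>
    obtain ⟨F, hF⟩ := ih
    refine ⟨fourierMotzkin F p, fun y => ?_⟩
    rw [Finset.coe_insert, Set.insert_eq, closure_union, sup_comm]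
    exact mem_sat_sup_closure_singleton_iff_fourierMotzkin hF p y

theorem eq_zero_of_mem_sat_of_neg_mem_sat [IsAddTorsionFree Λ] {S : AddSubmonoid Λ}
    (hS : ∀ a ∈ S, -a ∈ S → a = 0) {y : Λ} (hy : y ∈ S.sat) (hy' : -y ∈ S.sat) : y = 0 := by
  obtain ⟨m, hm, hmy⟩ := hy
  obtain ⟨n, hn, hny⟩ := hy'
  have hneg : -(n • m • y) = m • n • -y := by rw [smul_neg, smul_neg, smul_comm]
  have : (n * m) • y = 0 := by
    rw [mul_smul]
    exact hS _ (nsmul_mem hmy n) (hneg ▸ nsmul_mem hny m)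
  exact nsmul_right_injective (Nat.mul_pos hn hm).ne' (this.trans (smul_zero _).symm)

theorem eq_zero_of_nonneg_of_map_sum_eq_zero {s : Finset Λ}
    (hs : AddSubgroup.closure (s : Set Λ) = ⊤) {φ : Λ →+ ℤ} (hφ : ∀ x ∈ s, 0 ≤ φ x)
    (hsum : φ (∑ x ∈ s, x) = 0) : φ = 0 := by
  rw [map_sum, Finset.sum_eq_zero_iff_of_nonneg hφ] at hsum
  exact AddMonoidHom.eq_of_eqOn_dense hs hsum

theorem exists_pi_sat_closure [IsAddTorsionFree Λ] [Module.Finite ℤ Λ] (s : Finset Λ)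
    (hs : AddSubgroup.closure (s : Set Λ) = ⊤) :
    ∃ (r : ℕ) (Φ : Λ →+ (Fin r → ℤ)) (K : ℕ), 0 < K ∧ Φ (∑ x ∈ s, x) = (fun _ => (K : ℤ)) ∧
      ∀ y, y ∈ (closure (s : Set Λ)).sat ↔ 0 ≤ Φ y := by
  classical
  obtain ⟨F, hF⟩ := exists_finset_sat_closure s
  set u := ∑ x ∈ s, x
  have hgen : ∀ φ ∈ F, ∀ x ∈ s, 0 ≤ φ x := fun φ hφ x hx =>
    (hF x).1 (mem_sat_of_mem (subset_closure hx)) φ hφ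
  set F₀ := F.filter (· ≠ 0)
  have hpos : ∀ φ ∈ F₀, 0 < φ u := by
    intro φ hφ
    obtain ⟨hφ, hφ0⟩ := Finset.mem_filter.1 hφ
    refine (Finset.sum_nonneg (hgen φ hφ)).trans_eq (map_sum φ _ _).symm |>.lt_of_ne fun h => ?_
    exact hφ0 (eq_zero_of_nonneg_of_map_sum_eq_zero hs (hgen φ hφ) h.symm)
  -- Rescaled by `c φ`, every `φ ∈ F₀` takes the value `∏ ψ ∈ F₀, ψ u` at `u`.
  let c : (Λ →+ ℤ) → ℤ := fun φ => ∏ ψ ∈ F₀.erase φ, ψ u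
  have hc : ∀ φ ∈ F₀, 0 < c φ := fun φ _ =>
    Finset.prod_pos fun ψ hψ => hpos ψ (Finset.mem_of_mem_erase hψ)
  let e := F₀.equivFin
  refine ⟨F₀.card, AddMonoidHom.pi fun i => c (e.symm i) • (e.symm i : Λ →+ ℤ),
    (∏ φ ∈ F₀, φ u).toNat, Int.lt_toNat.2 (Finset.prod_pos hpos), ?_, fun y => ?_⟩
  · funext i
    simp [c, Int.toNat_of_nonneg (Finset.prod_pos hpos).le,
      Finset.prod_erase_mul _ _ (e.symm i).2]
  · rw [hF, Pi.le_def]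
    simp only [AddMonoidHom.pi_apply, AddMonoidHom.smul_apply, smul_eq_mul, Pi.zero_apply]
    refine Iff.trans ?_ (e.symm.surjective.forall (p := fun φ : F₀ => 0 ≤ c φ * (φ : Λ →+ ℤ) y))
    simp only [Subtype.forall]
    refine ⟨fun h φ hφ => mul_nonneg (hc φ hφ).le (h φ (Finset.mem_filter.1 hφ).1),
      fun h φ hφ => ?_⟩
    by_cases hφ0 : φ = 0
    · simp [hφ0]
    have hφ₀ : φ ∈ F₀ := Finset.mem_filter.2 ⟨hφ, hφ0⟩
    exact (mul_nonneg_iff_of_pos_left (hc φ hφ₀)).1 (h φ hφ₀)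

theorem injective_of_forall_mem_sat_iff [IsAddTorsionFree Λ] {ι : Type*} {S : AddSubmonoid Λ}
    (hS : ∀ a ∈ S, -a ∈ S → a = 0) {Φ : Λ →+ (ι → ℤ)} (hΦ : ∀ y, y ∈ S.sat ↔ 0 ≤ Φ y) :
    Function.Injective Φ :=
  (injective_iff_map_eq_zero Φ).2 fun y hy =>
    eq_zero_of_mem_sat_of_neg_mem_sat hS ((hΦ y).2 hy.ge) ((hΦ (-y)).2 (by simp [hy]))

end AddSubmonoid

theorem AddSubmonoid.exists_pos_forall_nsmul_mem {A : Type*} [AddCommMonoid A] [AddMonoid.FG A]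
    (S : AddSubmonoid A) (h : ∀ a, ∃ m : ℕ, 0 < m ∧ m • a ∈ S) :
    ∃ m : ℕ, 0 < m ∧ ∀ a, m • a ∈ S := by
  classical
  obtain ⟨T, hT⟩ := AddMonoid.FG.fg_top (M := A)
  choose m hm hmS using h
  refine ⟨∏ t ∈ T, m t, Finset.prod_pos fun t _ => hm t, fun a => ?_⟩
  have hle : closure (T : Set A) ≤ S.comap ((∏ t ∈ T, m t) • AddMonoidHom.id A) := by
    rw [closure_le]
    intro t ht
    show (∏ t ∈ T, m t) • t ∈ S
    rw [← Finset.prod_erase_mul T m ht, mul_smul]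
    exact nsmul_mem (hmS t) _
  simpa using hle (hT ▸ mem_top a)

def AddMonoidHom.toNat {M ι : Type*} [AddMonoid M] (h : M →+ (ι → ℤ)) (hh : ∀ x, 0 ≤ h x) :
    M →+ (ι → ℕ) where
  toFun x i := (h x i).toNat
  map_zero' := by ext; simp
  map_add' x y := by ext i; simp [Int.toNat_add (hh x i) (hh y i)]

theorem AddMonoidHom.natCast_toNat_apply {M ι : Type*} [AddMonoid M] (h : M →+ (ι → ℤ))
    (hh : ∀ x, 0 ≤ h x) (x : M) (i : ι) : ((h.toNat hh x i : ℕ) : ℤ) = h x i :=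
  Int.toNat_of_nonneg (hh x i)

namespace Algebra.GrothendieckAddGroup

variable {M : Type*} [AddCommMonoid M]

theorem mk_eq_of_sub_of (a : M) (s : (⊤ : AddSubmonoid M)) :
    AddLocalization.mk a s = of a - of (s : M) := by
  rw [eq_sub_iff_add_eq]
  simp only [AddSubmonoid.LocalizationMap.toAddMonoidHom_apply,
    ← AddLocalization.mk_zero_eq_addMonoidOf_mk, AddLocalization.mk_add, add_zero]
  rw [AddLocalization.mk_eq_mk_iff, AddLocalization.r_iff_exists]
  exact ⟨0, by simp [add_comm]⟩

theorem closure_image_of {T : Set M} (hT : AddSubmonoid.closure T = ⊤) :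
    AddSubgroup.closure (of '' T) = ⊤ := by
  have hof : ∀ a, of a ∈ AddSubgroup.closure (of '' T) := fun a =>
    AddSubgroup.le_closure_toAddSubmonoid _ <| AddMonoidHom.map_mclosure of T ▸
      AddSubmonoid.mem_map_of_mem of (hT ▸ AddSubmonoid.mem_top a)
  refine (AddSubgroup.eq_top_iff' _).2 fun z => ?_
  induction z using AddLocalization.ind with
  | _ y => rw [mk_eq_of_sub_of]; exact sub_mem (hof _) (hof _)

end Algebra.GrothendieckAddGroup

theorem AddMonoidHom.exists_comp_eq_of_injective {A M Λ : Type*} [AddZeroClass A] [AddZeroClass M]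
    [AddZeroClass Λ] {e : M →+ Λ} (he : Function.Injective e) {h : A →+ Λ}
    (hh : ∀ a, h a ∈ AddMonoidHom.mrange e) : ∃ g : A →+ M, e.comp g = h := by
  let E := AddEquiv.ofBijective e.mrangeRestrict
    ⟨fun x y hxy => he (congrArg Subtype.val hxy), e.mrangeRestrict_surjective⟩
  refine ⟨E.symm.toAddMonoidHom.comp (h.codRestrict _ hh), ext fun a => ?_⟩
  exact congrArg Subtype.val (E.apply_symm_apply (h.codRestrict _ hh a))

theorem AddSubgroup.fg_comap_toAddSubmonoid {A G : Type*} [AddCommMonoid A] [PartialOrder A]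
    [WellQuasiOrderedLE A] [IsOrderedCancelAddMonoid A] [CanonicallyOrderedAdd A]
    [AddCommGroup G] (H : AddSubgroup G) (c : A →+ G) : (H.toAddSubmonoid.comap c).FG :=
  AddSubmonoid.fg_of_subtractive fun x hx y hxy => by
    simpa using H.sub_mem hxy hx

def HasSaturatedModel (M : Type*) [AddCommMonoid M] (r : ℕ) : Prop :=
  ∃ Q : AddSubmonoid (Fin r → ℕ), Q.FG ∧ (fun _ => 1) ∈ Q ∧
    (∀ x a b, a ∈ Q → b ∈ Q → x + b = a → x ∈ Q) ∧
    ∃ (N : ℕ) (f : M →+ Q) (g : Q →+ M), 0 < N ∧ ∀ x, g (f x) = N • x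

open AddSubmonoid in
theorem HasSaturatedModel.of_functionals {M Λ : Type*} [AddCancelCommMonoid M]
    [AddCommGroup Λ] {r : ℕ} {e : M →+ Λ} (he : Function.Injective e)
    {Φ : Λ →+ (Fin r → ℤ)} (hΦinj : Function.Injective Φ) {K : ℕ} (hK : 0 < K)
    (hΦK : (fun _ => (K : ℤ)) ∈ Φ.range) (hΦ : ∀ y, y ∈ (AddMonoidHom.mrange e).sat ↔ 0 ≤ Φ y) :
    HasSaturatedModel M r := by
  let cast : (Fin r → ℕ) →+ (Fin r → ℤ) := (Nat.castAddMonoidHom ℤ).compLeft (Fin r)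
  let Q := Φ.range.toAddSubmonoid.comap (K • cast)
  have hQfg : Q.FG := Φ.range.fg_comap_toAddSubmonoid _
  have hnonneg : ∀ x, 0 ≤ Φ (e x) := fun x =>
    (hΦ _).1 (mem_sat_of_mem (AddMonoidHom.mem_mrange.2 ⟨x, rfl⟩))
  let f : M →+ Q := ((Φ.comp e).toNat hnonneg).codRestrict Q fun x =>
    mem_comap.2 <| AddMonoidHom.mem_range.2
      ⟨K • e x, by ext i; simp [cast, AddMonoidHom.natCast_toNat_apply]⟩
  obtain ⟨ζ, hζ⟩ := AddMonoidHom.exists_comp_eq_of_injective hΦinj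
    (h := (K • cast).comp Q.subtype) fun v => v.2
  have hζf : ∀ x, ζ (f x) = K • e x := fun x => hΦinj <| by
    rw [← AddMonoidHom.comp_apply Φ ζ, hζ]
    ext i
    simp [cast, f, AddMonoidHom.natCast_toNat_apply]
  have : AddMonoid.FG Q := (AddMonoid.fg_iff_addSubmonoid_fg Q).2 hQfg
  obtain ⟨m, hm, hmζ⟩ := ((AddMonoidHom.mrange e).comap ζ).exists_pos_forall_nsmul_mem fun v => by
    obtain ⟨m, hm, hmv⟩ := (hΦ (ζ v)).2 <| by
      rw [← AddMonoidHom.comp_apply Φ ζ, hζ]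
      exact nsmul_nonneg (fun i => Int.natCast_nonneg _) K
    exact ⟨m, hm, by rwa [mem_comap, map_nsmul]⟩
  obtain ⟨g, hg⟩ := AddMonoidHom.exists_comp_eq_of_injective he (h := m • ζ) fun v => by
    simpa using hmζ v
  refine ⟨Q, hQfg, ?_, ?_, m * K, f, g, Nat.mul_pos hm hK, fun x => he ?_⟩
  · obtain ⟨u, hu⟩ := hΦK
    exact ⟨u, by ext i; simp [cast, hu]⟩
  · rintro x a b ha hb rfl
    have := Φ.range.sub_mem ha hb
    rwa [map_add, add_sub_cancel_right] at this
  · rw [← AddMonoidHom.comp_apply e g, hg, AddMonoidHom.smul_apply, hζf, map_nsmul, mul_smul]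

open AddSubmonoid in
theorem exists_hasSaturatedModel {M : Type*} [AddCancelCommMonoid M] [AddMonoid.FG M]
    [IsAddTorsionFree M] (hsharp : ∀ x y : M, x + y = 0 → x = 0) :
    ∃ r, HasSaturatedModel M r := by
  classical
  obtain ⟨T, hT⟩ := AddMonoid.FG.fg_top (M := M)
  let e : M →+ GrothendieckAddGroup M := GrothendieckAddGroup.of
  have he : Function.Injective e := GrothendieckAddGroup.of_injective
  obtain ⟨r, Φ, K, hK, hΦu, hΦ⟩ := exists_pi_sat_closure (T.image e)
    (by rw [Finset.coe_image]; exact GrothendieckAddGroup.closure_image_of hT)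
  rw [Finset.coe_image, ← AddMonoidHom.map_mclosure, hT, ← AddMonoidHom.mrange_eq_map] at hΦ
  have hpointed : ∀ a ∈ AddMonoidHom.mrange e, -a ∈ AddMonoidHom.mrange e → a = 0 := by
    rintro _ ⟨x, rfl⟩ ⟨y, hy⟩
    have : y + x = 0 := he (by simp [hy])
    simp [hsharp x y (by rwa [add_comm])]
  exact ⟨r, HasSaturatedModel.of_functionals he (injective_of_forall_mem_sat_iff hpointed hΦ)
    hK ⟨_, hΦu⟩ hΦ⟩

/-- Let `P` be a fine and sharp monoid with torsion-free groupification.  Then there are an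
integer `r ≥ 0`, a fine saturated submonoid `Q ⊆ ℕ^r` containing `(1,…,1)` and satisfying
`Q = ℕ^r ∩ Q^gp`, an integer `N > 0` and morphisms `f : P → Q`, `g : Q → P` with
`g (f x) = x ^ N` for all `x ∈ P`. -/
theorem stmt13 {P : Type*} [CancelCommMonoid P] (hfg : Monoid.FG P)
    (hsharp : ∀ x : P, IsUnit x → x = 1)
    (htf : ∀ a b : P, ∀ n : ℕ, 0 < n → a ^ n = b ^ n → a = b) :
    ∃ (r : ℕ) (Q : Submonoid (Multiplicative (Fin r → ℕ))),
      Monoid.FG ↥Q ∧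
      Multiplicative.ofAdd (fun _ => (1 : ℕ)) ∈ Q ∧
      (∀ x : Multiplicative (Fin r → ℕ), (∃ a ∈ Q, ∃ b ∈ Q, x * b = a) → x ∈ Q) ∧
      ∃ (N : ℕ) (f : P →* ↥Q) (g : ↥Q →* P), 0 < N ∧ ∀ x : P, g (f x) = x ^ N := by
  have : IsMulTorsionFree P := ⟨fun n hn a b hab => htf a b n (Nat.pos_of_ne_zero hn) hab⟩
  have : AddMonoid.FG (Additive P) := Monoid.fg_iff_add_fg.1 hfg
  obtain ⟨r, Q, hQ, hone, hsat, N, f, g, hN, hgf⟩ := exists_hasSaturatedModel (M := Additive P)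
    fun x y hxy => hsharp x (.of_mul_eq_one y hxy)
  refine ⟨r, Q.toSubmonoid, (Monoid.fg_iff_submonoid_fg _).2 ((AddSubmonoid.fg_iff_mul_fg Q).1 hQ),
    hone, ?_, N, f.toMultiplicative, g.toMultiplicative, hN, hgf⟩
  rintro x ⟨a, ha, b, hb, hab⟩
  exact hsat x a b ha hb hab
end

section
/- Let λ: P → Q be a morphism of fine monoids such that λ^gp: P^gp → Q^gp is an isomorphism, let F ⊂ Q be a face, and let λ_F: F ∩ P → F denote the inclusion-induced map (where F ∩ P := λ^{-1}(F)). Then: (i) the natural map Coker(λ_F^gp) → P^gp/(F∩P)^gp is injective; (ii) if moreover P is saturated, then Coker(λ_F^gp) is a free abelian group of finite rank. -/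
/-!
Part (i) is formal: both quotients are taken by the same subgroup `(F ∩ P)^gp`.
For (ii), a face of the finitely generated monoid `Q` is finitely generated, so the cokernel is a
finitely generated abelian group and it suffices to show it is torsion-free. If `x ∈ F^gp` and
`x^n = λp / λq` with `p, q ∈ F ∩ P`, then `(x · λq)^n = λ(p q^{n-1})`, so saturation of `P` gives
`x · λq = λd` with `d ∈ P`. Now `λd / λq = x ∈ F^gp` and `λq ∈ F`, and the face property forces
`λd ∈ F`; hence `x ∈ (F ∩ P)^gp`.
-/

open Function Subgroup

theorem QuotientGroup.map_subtype_subgroupOf_injective {G : Type*} [Group G] (A B : Subgroup G)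
    [B.Normal] : Injective (QuotientGroup.map (B.subgroupOf A) B A.subtype fun _ hx => hx) := by
  refine (injective_iff_map_eq_one _).2 fun z hz => ?_
  induction z using QuotientGroup.induction_on with | H x => ?_
  exact (QuotientGroup.eq_one_iff x).2 ((QuotientGroup.eq_one_iff (A.subtype x)).1 hz)

theorem Subgroup.mem_closure_image_submonoid_iff {M G : Type*} [CommMonoid M] [CommGroup G]
    (f : M →* G) (S : Submonoid M) {x : G} :
    x ∈ closure (f '' S) ↔ ∃ a ∈ S, ∃ b ∈ S, f a / f b = x := by
  refine ⟨fun hx => ?_, ?_⟩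
  · induction hx using closure_induction with
    | mem x hx =>
      obtain ⟨a, ha, rfl⟩ := hx
      exact ⟨a, ha, 1, one_mem S, by simp⟩
    | one => exact ⟨1, one_mem S, 1, one_mem S, by simp⟩
    | mul x y _ _ ihx ihy =>
      obtain ⟨a, ha, b, hb, rfl⟩ := ihx
      obtain ⟨c, hc, d, hd, rfl⟩ := ihy
      exact ⟨a * c, mul_mem ha hc, b * d, mul_mem hb hd, by simp [div_mul_div_comm]⟩
    | inv x _ ihx =>
      obtain ⟨a, ha, b, hb, rfl⟩ := ihx
      exact ⟨b, hb, a, ha, (inv_div _ _).symm⟩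
  · rintro ⟨a, ha, b, hb, rfl⟩
    exact div_mem (subset_closure ⟨a, ha, rfl⟩) (subset_closure ⟨b, hb, rfl⟩)

theorem Subgroup.closure_image_fg {M G : Type*} [Monoid M] [Group G] (f : M →* G)
    {S : Submonoid M} (hS : S.FG) : (closure (f '' S)).FG := by
  obtain ⟨T, rfl, hT⟩ := (Submonoid.fg_iff S).1 hS
  refine (Subgroup.fg_iff _).2 ⟨f '' T, le_antisymm ?_ ?_, hT.image f⟩
  · exact closure_mono (Set.image_mono Submonoid.subset_closure)
  · refine closure_le _ |>.2 <| Set.image_subset_iff.2 ?_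
    exact Submonoid.closure_le (S := (closure (f '' T)).toSubmonoid.comap f).2
      fun t ht => subset_closure ⟨t, ht, rfl⟩

theorem QuotientGroup.isMulTorsionFree_of_powSaturated {H : Type*} [CommGroup H]
    (N : Subgroup H) (hN : N.PowSaturated) : IsMulTorsionFree (H ⧸ N) := by
  refine isMulTorsionFree_iff_not_isOfFinOrder.2 fun a ha hfin => ha ?_
  obtain ⟨n, hn, hpow⟩ := isOfFinOrder_iff_pow_eq_one.1 hfin
  induction a using QuotientGroup.induction_on with | H x => ?_
  rw [← QuotientGroup.mk_pow, QuotientGroup.eq_one_iff] at hpow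
  exact (QuotientGroup.eq_one_iff x).2 ((hN hpow).resolve_left hn.ne')

theorem CommGroup.exists_mulEquiv_multiplicative_of_isMulTorsionFree (H : Type*) [CommGroup H]
    [Group.FG H] [IsMulTorsionFree H] : ∃ r : ℕ, Nonempty (H ≃* Multiplicative (Fin r → ℤ)) :=
  ⟨Module.finrank ℤ (Additive H),
    ⟨AddEquiv.toMultiplicativeRight (Module.finBasis ℤ (Additive H)).equivFun.toAddEquiv⟩⟩

def Submonoid.IsFace {Q : Type*} [Monoid Q] (F : Submonoid Q) : Prop :=
  ∀ x y : Q, x * y ∈ F → x ∈ F ∧ y ∈ F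

/-- For a cancellative monoid this says that an element of `P^gp` with a positive power in `P`
lies in `P`. -/
def Monoid.IsSaturated (P : Type*) [Monoid P] : Prop :=
  ∀ a b : P, ∀ n : ℕ, 0 < n → (∃ c, a ^ n = b ^ n * c) → ∃ d, a = b * d

theorem Submonoid.IsFace.fg {Q : Type*} [Monoid Q] [Monoid.FG Q] {F : Submonoid Q}
    (hF : F.IsFace) : F.FG := by
  obtain ⟨S, hS⟩ := Monoid.FG.fg_top (M := Q)
  refine (Submonoid.fg_iff F).2
    ⟨S ∩ F, le_antisymm ?_ fun f hf => ?_, S.finite_toSet.inter_of_left _⟩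
  · exact Submonoid.closure_le.2 Set.inter_subset_right
  · have hfS : f ∈ Submonoid.closure (S : Set Q) := hS ▸ Submonoid.mem_top f
    induction hfS using Submonoid.closure_induction with
    | mem x hx => exact Submonoid.subset_closure ⟨hx, hf⟩
    | one => exact one_mem _
    | mul x y _ _ ihx ihy => exact mul_mem (ihx (hF x y hf).1) (ihy (hF x y hf).2)

theorem Submonoid.IsFace.mem_of_div_mem_closure {Q G : Type*} [CommMonoid Q] [CommGroup G]
    {F : Submonoid Q} (hF : F.IsFace) {j : Q →* G} (hj : Injective j) {y z : Q} (hz : z ∈ F)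
    (h : j y / j z ∈ Subgroup.closure (j '' F)) : y ∈ F := by
  obtain ⟨a, ha, b, hb, hab⟩ := (mem_closure_image_submonoid_iff j F).1 h
  have hyb : y * b = a * z := hj <| by
    rw [map_mul, map_mul, ← div_eq_div_iff_mul_eq_mul, hab]
  exact (hF y b (hyb ▸ mul_mem ha hz)).1

theorem Monoid.IsSaturated.exists_eq_of_pow_eq {P G : Type*} [CommMonoid P] [CommGroup G]
    (hP : IsSaturated P) {φ : P →* G} (hφ : Injective φ)
    (hgen : ∀ g : G, ∃ a b : P, g = φ a * (φ b)⁻¹) {g : G} {n : ℕ} (hn : 0 < n) {c : P}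
    (h : g ^ n = φ c) : ∃ d, g = φ d := by
  obtain ⟨a, b, rfl⟩ := hgen g
  have hpow : a ^ n = b ^ n * c := hφ <| by
    rw [map_pow, map_mul, map_pow, ← h, ← div_eq_mul_inv, div_pow, mul_div_cancel]
  obtain ⟨d, rfl⟩ := hP a b n hn ⟨c, hpow⟩
  exact ⟨d, by rw [map_mul, mul_inv_cancel_comm]⟩

theorem Submonoid.IsFace.powSaturated_closure_subgroupOf {P Q G : Type*} [CommMonoid P]
    [CommMonoid Q] [CommGroup G] (hP : Monoid.IsSaturated P) {l : P →* Q} {j : Q →* G}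
    (hj : Injective j) (hjl : Injective (j.comp l))
    (hgen : ∀ g : G, ∃ a b : P, g = j (l a) * (j (l b))⁻¹) {F : Submonoid Q} (hF : F.IsFace) :
    ((Subgroup.closure (j '' (l '' (l ⁻¹' F)))).subgroupOf
      (Subgroup.closure (j '' F))).PowSaturated := by
  have hB : ∀ y, y ∈ Subgroup.closure (j '' (l '' (l ⁻¹' F))) ↔
      ∃ a ∈ F.comap l, ∃ b ∈ F.comap l, j (l a) / j (l b) = y := by
    rw [← Set.image_comp, ← MonoidHom.coe_comp]
    exact fun y => mem_closure_image_submonoid_iff (j.comp l) (F.comap l)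
  intro n x hx
  rcases n.eq_zero_or_pos with hn | hn
  · exact Or.inl hn
  refine Or.inr (mem_subgroupOf.2 ?_)
  obtain ⟨p, hp, q, hq, hpq⟩ := (hB _).1 (mem_subgroupOf.1 hx)
  obtain ⟨d, hd⟩ : ∃ d, (x : G) * j (l q) = j (l d) := by
    obtain ⟨m, rfl⟩ := Nat.exists_eq_add_one_of_ne_zero hn.ne'
    refine hP.exists_eq_of_pow_eq hjl hgen hn (c := p * q ^ m) ?_
    rw [mul_pow, ← coe_pow, ← hpq, MonoidHom.comp_apply, map_mul, map_mul, map_pow, map_pow,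
      pow_succ, div_mul_mul_cancel]
  have hxd : (x : G) = j (l d) / j (l q) := eq_div_of_mul_eq' hd
  have hld : l d ∈ F := hF.mem_of_div_mem_closure hj hq (hxd ▸ x.2)
  exact (hB _).2 ⟨d, hld, q, hq, hxd.symm⟩

theorem stmt17_general {P Q G : Type*} [CancelCommMonoid P] [CancelCommMonoid Q]
    (hQfg : Monoid.FG Q)
    (l : P →* Q) [CommGroup G] (jQ : Q →* G)
    (hjinj : Function.Injective jQ)
    (hgp_surj : ∀ g : G, ∃ a b : P, g = jQ (l a) * (jQ (l b))⁻¹)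
    (hgp_inj : ∀ a b : P, jQ (l a) = jQ (l b) → a = b)
    (F : Submonoid Q) (hface : ∀ x y : Q, x * y ∈ F → x ∈ F ∧ y ∈ F) :
    let Agp : Subgroup G := Subgroup.closure (⇑jQ '' ↑F)
    let Bgp : Subgroup G := Subgroup.closure (⇑jQ '' (⇑l '' (⇑l ⁻¹' ↑F)))
    Function.Injective
        (QuotientGroup.map (Bgp.subgroupOf Agp) Bgp Agp.subtype (fun x hx => hx)) ∧
      ((∀ a b : P, ∀ n : ℕ, 0 < n → (∃ c, a ^ n = b ^ n * c) → ∃ d, a = b * d) →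
        ∃ r : ℕ, Nonempty ((↥Agp ⧸ Bgp.subgroupOf Agp) ≃* Multiplicative (Fin r → ℤ))) := by
  intro Agp Bgp
  refine ⟨QuotientGroup.map_subtype_subgroupOf_injective Agp Bgp, fun hsat => ?_⟩
  have hF : F.IsFace := hface
  have : Group.FG Agp := (Group.fg_iff_subgroup_fg Agp).2 (closure_image_fg jQ hF.fg)
  have : IsMulTorsionFree (Agp ⧸ Bgp.subgroupOf Agp) :=
    QuotientGroup.isMulTorsionFree_of_powSaturated _
      (hF.powSaturated_closure_subgroupOf hsat hjinj (fun a b => hgp_inj a b) hgp_surj)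
  exact CommGroup.exists_mulEquiv_multiplicative_of_isMulTorsionFree _

/-- Let `λ : P → Q` be a morphism of fine monoids with `λ^gp` an isomorphism (encoded via a
groupification `jQ : Q → G` of `Q` such that `jQ ∘ λ` is also a groupification of `P`),
and `F ⊆ Q` a face.  Then:
(i) the natural map `Coker(λ_F^gp) → P^gp/(F∩P)^gp` is injective, where
`λ_F : F∩P := λ⁻¹F → F`; and
(ii) if moreover `P` is saturated, then `Coker(λ_F^gp)` is a free abelian group of finite
rank.  Here `F^gp` and `(F∩P)^gp` are realized as the subgroups of `G` generated by the
images of `F` and `λ(λ⁻¹F)` respectively. -/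
theorem stmt17 {P Q G : Type*} [CancelCommMonoid P] [CancelCommMonoid Q]
    (hPfg : Monoid.FG P) (hQfg : Monoid.FG Q)
    (l : P →* Q) [CommGroup G] (jQ : Q →* G)
    (hjinj : Function.Injective jQ)
    (hjgen : ∀ g : G, ∃ a b : Q, g = jQ a * (jQ b)⁻¹)
    (hgp_surj : ∀ g : G, ∃ a b : P, g = jQ (l a) * (jQ (l b))⁻¹)
    (hgp_inj : ∀ a b : P, jQ (l a) = jQ (l b) → a = b)
    (F : Submonoid Q) (hface : ∀ x y : Q, x * y ∈ F → x ∈ F ∧ y ∈ F) :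
    let Agp : Subgroup G := Subgroup.closure (⇑jQ '' ↑F)
    let Bgp : Subgroup G := Subgroup.closure (⇑jQ '' (⇑l '' (⇑l ⁻¹' ↑F)))
    Function.Injective
        (QuotientGroup.map (Bgp.subgroupOf Agp) Bgp Agp.subtype (fun x hx => hx)) ∧
      ((∀ a b : P, ∀ n : ℕ, 0 < n → (∃ c, a ^ n = b ^ n * c) → ∃ d, a = b * d) →
        ∃ r : ℕ, Nonempty ((↥Agp ⧸ Bgp.subgroupOf Agp) ≃* Multiplicative (Fin r → ℤ))) :=
  stmt17_general hQfg l jQ hjinj hgp_surj hgp_inj F hface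
end
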